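/- arXiv:2012.03123 — 9 statements merged into one kernel-verified Lean document; each statement's English description precedes it below -/
import Mathlib

section
/- If U is a finite normal subgroup of a group V, then for all v in V and u in U, the elements v^|U| and (vu)^|U| are conjugate by an element of U. -/
/-!
Let `ψ` be the permutation `t ↦ v⁻¹ t (v u)` of `U`. Then `ψ^[k] t = v⁻ᵏ t (v u)ᵏ`, so `t` is a
`k`-periodic point of `ψ` exactly when `vᵏ t = t (v u)ᵏ`. Let `a` be a point of least minimal
period `m`. The `m`-periodic points form the coset `C a`, where `C` is the centralizer of `vᵐ`
in `U`, so their number divides `|U|`; and `ψ` permutes them with all orbits of length exactly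
`m`, by minimality of `m`. Hence `m ∣ |U|`, and `a` conjugates `v ^ |U|` to `(v u) ^ |U|`.
-/

open Function

namespace Equiv.Perm

variable {α : Type*}

theorem dvd_card_of_forall_minimalPeriod_eq [Finite α] (σ : Perm α) {m : ℕ}
    (h : ∀ x, minimalPeriod σ x = m) : m ∣ Nat.card α := by
  have : Fintype (MulAction.orbitRel.Quotient (Subgroup.zpowers σ) α) := Fintype.ofFinite _
  rw [Nat.card_congr (MulAction.selfEquivSigmaOrbits (Subgroup.zpowers σ) α), Nat.card_sigma]
  refine Finset.dvd_sum fun ω _ => ?_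
  rw [Nat.card_congr (MulAction.orbitZPowersEquiv σ ω.out), Nat.card_zmod]
  exact (h _).symm ▸ dvd_rfl

theorem isPeriodicPt_apply_iff (σ : Perm α) {m : ℕ} {x : α} :
    IsPeriodicPt σ m (σ x) ↔ IsPeriodicPt σ m x := by
  refine ⟨fun hx => σ.injective ?_, IsPeriodicPt.apply⟩
  rw [← iterate_succ_apply' σ m x, iterate_succ_apply]
  exact hx

theorem dvd_card_isPeriodicPt_of_le_minimalPeriod [Finite α] (σ : Perm α) {m : ℕ} (hm : 0 < m)
    (h : ∀ x, m ≤ minimalPeriod σ x) : m ∣ Nat.card {x // IsPeriodicPt σ m x} := by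
  have hσ (x : α) : IsPeriodicPt σ m (σ x) ↔ IsPeriodicPt σ m x := σ.isPeriodicPt_apply_iff
  refine (σ.subtypePerm hσ).dvd_card_of_forall_minimalPeriod_eq fun x => ?_
  have hτ : minimalPeriod (σ.subtypePerm hσ) x = minimalPeriod σ x := by
    refine minimalPeriod_eq_minimalPeriod_iff.mpr fun n => ?_
    change (σ.subtypePerm hσ)^[n] x = x ↔ σ^[n] x = x
    rw [iterate_eq_pow, iterate_eq_pow, subtypePerm_pow, Subtype.ext_iff, subtypePerm_apply]
  rw [hτ]
  exact le_antisymm (x.2.minimalPeriod_le hm) (h x)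

end Equiv.Perm

namespace Subgroup

variable {V : Type*} [Group V] (U : Subgroup V)

theorem card_conjugators_dvd [Finite U] {x y a : V} (ha : a ∈ U) (hxy : x * a = a * y) :
    Nat.card {t : U // x * t = t * y} ∣ Nat.card U := by
  obtain rfl : y = a⁻¹ * x * a := by rw [mul_assoc, hxy, inv_mul_cancel_left]
  have e : {t : U // x * t = t * (a⁻¹ * x * a)} ≃ (centralizer {x}).subgroupOf U :=
    (Equiv.mulRight (⟨a, ha⟩ : U)⁻¹).subtypeEquiv fun t => by
      rw [mem_subgroupOf, mem_centralizer_singleton_iff]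
      simp only [Equiv.coe_mulRight, coe_mul, coe_inv]
      conv_rhs => rw [← mul_left_inj (a : V)]
      simp only [mul_assoc, inv_mul_cancel, mul_one]
      exact eq_comm
  rw [Nat.card_congr e]
  exact card_subgroup_dvd_card _

variable [U.Normal]

def conjMulRight (v : V) (u : U) : Equiv.Perm U :=
  (MulAut.conjNormal v⁻¹).toEquiv.trans (Equiv.mulRight u)

theorem coe_conjMulRight_iterate (v : V) (u : U) (k : ℕ) (t : U) :
    ((conjMulRight U v u)^[k] t : V) = v⁻¹ ^ k * t * (v * u) ^ k := by
  induction k with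
  | zero => simp
  | succ k ih =>
    rw [iterate_succ_apply']
    change v⁻¹ * ((conjMulRight U v u)^[k] t : V) * v⁻¹⁻¹ * u = _
    rw [ih, inv_inv, pow_succ', pow_succ]
    simp only [mul_assoc]

theorem isPeriodicPt_conjMulRight_iff {v : V} {u : U} {k : ℕ} {t : U} :
    IsPeriodicPt (conjMulRight U v u) k t ↔ v ^ k * t = t * (v * u) ^ k := by
  rw [IsPeriodicPt, IsFixedPt, ← Subtype.coe_inj, coe_conjMulRight_iterate, inv_pow, mul_assoc,
    inv_mul_eq_iff_eq_mul, eq_comm]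

end Subgroup

theorem stmt_1 (V : Type*) [Group V] (U : Subgroup V) [U.Normal] [Fintype U]
    (v : V) (u : V) (hu : u ∈ U) :
    ∃ w ∈ U, (v * u) ^ (Nat.card U) = w⁻¹ * v ^ (Nat.card U) * w := by
  set ψ := U.conjMulRight v ⟨u, hu⟩
  obtain ⟨a, -, hmin⟩ := Finset.univ.exists_min_image (minimalPeriod ψ) Finset.univ_nonempty
  have hm : 0 < minimalPeriod ψ a :=
    minimalPeriod_pos_of_mem_periodicPts (ψ.injective.mem_periodicPts a)
  have hdvd : minimalPeriod ψ a ∣ Nat.card U := by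
    refine (ψ.dvd_card_isPeriodicPt_of_le_minimalPeriod hm
      fun t => hmin t (Finset.mem_univ t)).trans ?_
    rw [Nat.card_congr (Equiv.subtypeEquivRight fun t => U.isPeriodicPt_conjMulRight_iff)]
    exact U.card_conjugators_dvd a.2
      (U.isPeriodicPt_conjMulRight_iff.mp (isPeriodicPt_minimalPeriod ψ a))
  have hconj := U.isPeriodicPt_conjMulRight_iff.mp (isPeriodicPt_iff_minimalPeriod_dvd.mpr hdvd)
  exact ⟨a, a.2, by rw [mul_assoc, hconj, inv_mul_cancel_left]⟩
end

section
/- For any finite group G and any positive integer n, the number of elements of G whose n-th power lies in a fixed subgroup A of G is divisible by |A|. -/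
/-!
For `g` with `g ^ n ∈ A`, look at the sequence of cosets `g ^ i A`, `i ∈ ℕ`. Conjugating `g` by
`a ∈ A` translates this sequence by `a`, so the sequences that occur form an `A`-stable set, and
the elements with a given sequence `f` form a left coset of the stabilizer of `f` (which lies in
`A`, as it fixes `f 0 = A`). The count is therefore the sum of `|Stab_A f|` over an `A`-stable
set, which by Burnside's lemma is `|A|` times the number of orbits.
-/

namespace MulAction

variable {G H X Z : Type*} [Group G] [MulAction G X] [Group H] [MulAction H X]

theorem card_dvd_card_sigma_stabilizer :
    Nat.card H ∣ Nat.card (Σ x : X, stabilizer H x) := by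
  have e : (Σ x : X, stabilizer H x) ≃ Σ h : H, fixedBy X h :=
    (Equiv.subtypeProdEquivSigmaSubtype fun (x : X) (h : H) => h ∈ stabilizer H x).symm.trans <|
      ((Equiv.prodComm X H).subtypeEquiv fun _ => Iff.rfl).trans <|
        Equiv.subtypeProdEquivSigmaSubtype fun (h : H) (x : X) => x ∈ fixedBy X h
  rw [Nat.card_congr (e.trans (sigmaFixedByEquivOrbitsProdGroup H X)), Nat.card_prod]
  exact dvd_mul_left _ _

theorem card_dvd_card_of_fiber_equiv_stabilizer (φ : Z → X)
    (hφ : ∀ (h : H) (z : Z), h • φ z ∈ Set.range φ)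
    (e : ∀ z, {z' // φ z' = φ z} ≃ stabilizer H (φ z)) : Nat.card H ∣ Nat.card Z := by
  let R : SubMulAction H X := ⟨Set.range φ, by rintro h _ ⟨z, rfl⟩; exact hφ h z⟩
  let ψ : Z → R := fun z => ⟨φ z, z, rfl⟩
  have fiber (r : R) : Nonempty ({z // ψ z = r} ≃ stabilizer H r) := by
    obtain ⟨_, z, rfl⟩ := r
    exact ⟨(Equiv.subtypeEquivRight fun _ => Subtype.ext_iff).trans <|
      (e z).trans (MulEquiv.subgroupCongr (SubMulAction.stabilizer_of_subMul (ψ z)).symm).toEquiv⟩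
  rw [← Nat.card_congr (Equiv.sigmaFiberEquiv ψ),
    Nat.card_congr (Equiv.sigmaCongrRight fun r => (fiber r).some)]
  exact card_dvd_card_sigma_stabilizer

def orbitSeq (x : G) (p : X) : ℕ → X := fun i => x ^ i • p

theorem smul_orbitSeq (h x : G) (p : X) : h • orbitSeq x p = orbitSeq (h * x * h⁻¹) (h • p) := by
  funext i
  simp only [orbitSeq, Pi.smul_apply, conj_pow, mul_smul, inv_smul_smul]

theorem stabilizer_orbitSeq_le (x : G) (p : X) : stabilizer G (orbitSeq x p) ≤ stabilizer G p :=
  fun s hs => by simpa [orbitSeq] using congrFun hs 0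

theorem orbitSeq_eq_orbitSeq_iff {x y : G} {p : X} :
    orbitSeq y p = orbitSeq x p ↔ x⁻¹ * y ∈ stabilizer G (orbitSeq x p) := by
  have shift_iff (i : ℕ) : y • orbitSeq x p i = orbitSeq x p (i + 1) ↔
      (x⁻¹ * y) • orbitSeq x p i = orbitSeq x p i := by
    rw [mul_smul, inv_smul_eq_iff, orbitSeq, orbitSeq, pow_succ', mul_smul]
  rw [mem_stabilizer_iff, funext_iff, funext_iff]
  simp only [Pi.smul_apply, ← shift_iff]
  constructor
  · intro h i
    rw [← h, ← h, orbitSeq, orbitSeq, pow_succ', mul_smul]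
  · intro h i
    induction i with
    | zero => simp [orbitSeq]
    | succ i ih => rw [← h, ← ih, orbitSeq, orbitSeq, pow_succ', mul_smul]

theorem card_stabilizer_dvd_card_pow_mem_stabilizer (p : X) (n : ℕ) :
    Nat.card (stabilizer G p) ∣ Nat.card {g : G // g ^ n ∈ stabilizer G p} := by
  refine card_dvd_card_of_fiber_equiv_stabilizer (fun g => orbitSeq g.1 p) ?_ fun x => ?_
  · rintro ⟨h, hh⟩ ⟨x, hx⟩
    refine ⟨⟨h * x * h⁻¹, ?_⟩, ?_⟩
    · rw [conj_pow]
      exact mul_mem (mul_mem hh hx) (inv_mem hh)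
    · rw [Subgroup.mk_smul, smul_orbitSeq, hh]
  · obtain ⟨x, hx⟩ := x
    have pow_mem {y : G} (hy : orbitSeq y p = orbitSeq x p) : y ^ n ∈ stabilizer G p := by
      simpa [orbitSeq, mem_stabilizer_iff.1 hx] using congrFun hy n
    have mul_mem_iff {s : G} :
        orbitSeq (x * s) p = orbitSeq x p ↔ s ∈ stabilizer G (orbitSeq x p) := by
      rw [orbitSeq_eq_orbitSeq_iff, inv_mul_cancel_left]
    exact
      { toFun y := ⟨⟨x⁻¹ * y, stabilizer_orbitSeq_le _ _ (orbitSeq_eq_orbitSeq_iff.1 y.2)⟩,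
          orbitSeq_eq_orbitSeq_iff.1 y.2⟩
        invFun s := ⟨⟨x * s, pow_mem (mul_mem_iff.2 s.2)⟩, mul_mem_iff.2 s.2⟩
        left_inv y := by ext; simp
        right_inv s := by ext; simp }

end MulAction

theorem stmt_2_general (G : Type*) [Group G] (A : Subgroup G) (n : ℕ) :
    Nat.card A ∣ Nat.card {g : G // g ^ n ∈ A} := by
  simpa using MulAction.card_stabilizer_dvd_card_pow_mem_stabilizer (G := G) ((1 : G) : G ⧸ A) n

theorem stmt_2 (G : Type*) [Group G] [Fintype G] (A : Subgroup G) (n : ℕ) (hn : 0 < n) :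
    Nat.card A ∣ Nat.card {g : G // g ^ n ∈ A} :=
  stmt_2_general G A n
end

section
/- In any finite group G, the number of pairs (x, y) with x^3 = 1 = y^5 that generate G is divisible by gcd(15, |G' · G^15|), where G' is the commutator subgroup and G^15 is the subgroup generated by all 15-th powers. -/
open Subgroup MulAction

lemma perm_pdvd {S : Type*} [Finite S] (p : ℕ) [Fact p.Prime] (σ : Equiv.Perm S)
    (hσ : σ ^ p = 1) (hfix : ∀ s, σ s ≠ s) : p ∣ Nat.card S := by
  let H := Subgroup.zpowers σ
  have hH : IsPGroup p H := by
    intro g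
    refine ⟨1, ?_⟩
    obtain ⟨k, hk⟩ := g.2
    ext1
    push_cast
    simp only [pow_one]
    rw [← hk, ← zpow_natCast, ← zpow_mul, mul_comm, zpow_mul, zpow_natCast, hσ, one_zpow]
  have hmod := hH.card_modEq_card_fixedPoints S
  have hempty : IsEmpty (fixedPoints H S) := by
    constructor
    rintro ⟨s, hs⟩
    exact hfix s (hs ⟨σ, Subgroup.mem_zpowers σ⟩)
  have h0 : Nat.card (fixedPoints H S) = 0 := Nat.card_of_isEmpty
  rw [h0] at hmod
  exact (Nat.modEq_zero_iff_dvd).mp hmod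

open Subgroup

lemma comm_all {G : Type*} [Group G] {x y : G} (hxy : Commute x y)
    (h : Subgroup.closure {x, y} = ⊤) : ∀ a b : G, Commute a b := by
  have hx : ∀ b : G, Commute x b := by
    intro b
    have hb : b ∈ Subgroup.closure {x, y} := h ▸ Subgroup.mem_top b
    induction hb using Subgroup.closure_induction with
    | mem z hz =>
      rcases hz with rfl | rfl
      · exact Commute.refl _
      · exact hxy
    | one => exact Commute.one_right _
    | mul a b _ _ ha hb => exact ha.mul_right hb
    | inv a _ ha => exact ha.inv_right
  have hy : ∀ b : G, Commute y b := by
    intro b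
    have hb : b ∈ Subgroup.closure {x, y} := h ▸ Subgroup.mem_top b
    induction hb using Subgroup.closure_induction with
    | mem z hz =>
      rcases hz with rfl | rfl
      · exact hxy.symm
      · exact Commute.refl _
    | one => exact Commute.one_right _
    | mul a b _ _ ha hb => exact ha.mul_right hb
    | inv a _ ha => exact ha.inv_right
  intro a b
  have ha : a ∈ Subgroup.closure {x, y} := h ▸ Subgroup.mem_top a
  induction ha using Subgroup.closure_induction with
  | mem z hz =>
    rcases hz with rfl | rfl
    · exact hx b
    · exact hy b
  | one => exact Commute.one_left _
  | mul c d _ _ hc hd => exact hc.mul_left hd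
  | inv c _ hc => exact hc.inv_left

lemma N_bot {G : Type*} [Group G] {x y : G} (hxy : Commute x y) (hx : x ^ 3 = 1)
    (hy : y ^ 5 = 1) (h : Subgroup.closure {x, y} = ⊤) :
    commutator G ⊔ Subgroup.closure (Set.range fun g : G => g ^ 15) = ⊥ := by
  have hcomm := comm_all hxy h
  have h1 : commutator G = ⊥ := by
    rw [commutator_def, eq_bot_iff, Subgroup.commutator_le]
    intro a _ b _
    rw [Subgroup.mem_bot, commutatorElement_eq_one_iff_commute]
    exact hcomm a b
  have hpow : ∀ g : G, g ^ 15 = 1 := by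
    intro g
    have hg : g ∈ Subgroup.closure {x, y} := h ▸ Subgroup.mem_top g
    induction hg using Subgroup.closure_induction with
    | mem z hz =>
      rcases hz with rfl | rfl
      · calc z ^ 15 = (z ^ 3) ^ 5 := by rw [← pow_mul]
          _ = 1 := by rw [hx, one_pow]
      · calc z ^ 15 = (z ^ 5) ^ 3 := by rw [← pow_mul]
          _ = 1 := by rw [hy, one_pow]
    | one => exact one_pow 15
    | mul a b _ _ ha hb => rw [(hcomm a b).mul_pow, ha, hb, one_mul]
    | inv a _ ha => rw [inv_pow, ha, inv_one]
  have h2 : Subgroup.closure (Set.range fun g : G => g ^ 15) = ⊥ := by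
    rw [eq_bot_iff, Subgroup.closure_le]
    rintro _ ⟨g, rfl⟩
    simp [hpow g]
  rw [h1, h2, sup_bot_eq]

lemma conj_closure_x {G : Type*} [Group G] (x y z : G)
    (h : Subgroup.closure {x, y} = ⊤) (hz : z ∈ Subgroup.closure {x, z * y * z⁻¹}) :
    Subgroup.closure {x, z * y * z⁻¹} = ⊤ := by
  rw [eq_top_iff, ← h, Subgroup.closure_le]
  rintro a (rfl | rfl)
  · exact Subgroup.subset_closure (Set.mem_insert _ _)
  · have hc : z * a * z⁻¹ ∈ Subgroup.closure {x, z * a * z⁻¹} :=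
      Subgroup.subset_closure (Set.mem_insert_of_mem _ rfl)
    have := mul_mem (mul_mem (inv_mem hz) hc) hz
    simpa [mul_assoc] using this
  -- a = z⁻¹ * (z*a*z⁻¹) * z

lemma conj_closure_y {G : Type*} [Group G] (x y z : G)
    (h : Subgroup.closure {x, y} = ⊤) (hz : z ∈ Subgroup.closure {z * x * z⁻¹, y}) :
    Subgroup.closure {z * x * z⁻¹, y} = ⊤ := by
  rw [eq_top_iff, ← h, Subgroup.closure_le]
  rintro a (rfl | rfl)
  · have hc : z * a * z⁻¹ ∈ Subgroup.closure {z * a * z⁻¹, y} :=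
      Subgroup.subset_closure (Set.mem_insert _ _)
    have := mul_mem (mul_mem (inv_mem hz) hc) hz
    simpa [mul_assoc] using this
  · exact Subgroup.subset_closure (Set.mem_insert_of_mem _ rfl)

theorem stmt_5 (G : Type*) [Group G] [Fintype G] :
    Nat.gcd 15
        (Nat.card (commutator G ⊔ Subgroup.closure (Set.range fun g : G => g ^ 15) : Subgroup G)) ∣
      Nat.card {p : G × G // p.1 ^ 3 = 1 ∧ p.2 ^ 5 = 1 ∧
        Subgroup.closure {p.1, p.2} = (⊤ : Subgroup G)} := by
  classical
  haveI : Fact (Nat.Prime 3) := ⟨by norm_num⟩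
  haveI : Fact (Nat.Prime 5) := ⟨by norm_num⟩
  let S := {p : G × G // p.1 ^ 3 = 1 ∧ p.2 ^ 5 = 1 ∧
        Subgroup.closure {p.1, p.2} = (⊤ : Subgroup G)}
  set N := (commutator G ⊔ Subgroup.closure (Set.range fun g : G => g ^ 15) : Subgroup G) with hNdef
  show Nat.gcd 15 (Nat.card N) ∣ Nat.card S
  -- the order-3 permutation
  let σ3 : Equiv.Perm S :=
  { toFun := fun s => ⟨(s.1.1, s.1.1 * s.1.2 * s.1.1⁻¹), s.2.1,
      by rw [conj_pow, s.2.2.1]; simp,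
      conj_closure_x _ _ _ s.2.2.2 (Subgroup.subset_closure (Set.mem_insert _ _))⟩
    invFun := fun s => ⟨(s.1.1, s.1.1⁻¹ * s.1.2 * s.1.1⁻¹⁻¹), s.2.1,
      by rw [conj_pow, s.2.2.1]; simp,
      conj_closure_x _ _ _ s.2.2.2 (inv_mem (Subgroup.subset_closure (Set.mem_insert _ _)))⟩
    left_inv := fun s => Subtype.ext (by obtain ⟨⟨a, b⟩, hh⟩ := s; simp; group)
    right_inv := fun s => Subtype.ext (by obtain ⟨⟨a, b⟩, hh⟩ := s; simp; group) }
  have key3 : ∀ u v : G, u ^ 3 = 1 → u * (u * (u * v * u⁻¹) * u⁻¹) * u⁻¹ = v := by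
    intro u v hu
    have e : u * u * u = u ^ 3 := by rw [pow_succ, pow_succ, pow_one]
    have h : u * (u * (u * v * u⁻¹) * u⁻¹) * u⁻¹ = (u * u * u) * v * (u * u * u)⁻¹ := by
      group
    rw [h, e, hu]; simp
  have hσ3 : σ3 ^ 3 = 1 := by
    apply Equiv.ext
    rintro ⟨⟨a, b⟩, h1, h2, h3⟩
    simp only [pow_succ, pow_zero, one_mul, Equiv.Perm.mul_apply, Equiv.Perm.one_apply]
    apply Subtype.ext
    show ((a, a * (a * (a * b * a⁻¹) * a⁻¹) * a⁻¹) : G × G) = (a, b)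
    rw [key3 a b h1]
  -- the order-5 permutation
  let σ5 : Equiv.Perm S :=
  { toFun := fun s => ⟨(s.1.2 * s.1.1 * s.1.2⁻¹, s.1.2),
      by rw [conj_pow, s.2.1]; simp, s.2.2.1,
      conj_closure_y _ _ _ s.2.2.2 (Subgroup.subset_closure (Set.mem_insert_of_mem _ rfl))⟩
    invFun := fun s => ⟨(s.1.2⁻¹ * s.1.1 * s.1.2⁻¹⁻¹, s.1.2),
      by rw [conj_pow, s.2.1]; simp, s.2.2.1,
      conj_closure_y _ _ _ s.2.2.2 (inv_mem (Subgroup.subset_closure (Set.mem_insert_of_mem _ rfl)))⟩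
    left_inv := fun s => Subtype.ext (by obtain ⟨⟨a, b⟩, hh⟩ := s; simp; group)
    right_inv := fun s => Subtype.ext (by obtain ⟨⟨a, b⟩, hh⟩ := s; simp; group) }
  have key5 : ∀ u v : G, u ^ 5 = 1 →
      u * (u * (u * (u * (u * v * u⁻¹) * u⁻¹) * u⁻¹) * u⁻¹) * u⁻¹ = v := by
    intro u v hu
    have e : u * u * u * u * u = u ^ 5 := by
      rw [pow_succ, pow_succ, pow_succ, pow_succ, pow_one]
    have h : u * (u * (u * (u * (u * v * u⁻¹) * u⁻¹) * u⁻¹) * u⁻¹) * u⁻¹ =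
        (u * u * u * u * u) * v * (u * u * u * u * u)⁻¹ := by group
    rw [h, e, hu]; simp
  have hσ5 : σ5 ^ 5 = 1 := by
    apply Equiv.ext
    rintro ⟨⟨a, b⟩, h1, h2, h3⟩
    simp only [pow_succ, pow_zero, one_mul, Equiv.Perm.mul_apply, Equiv.Perm.one_apply]
    apply Subtype.ext
    show ((b * (b * (b * (b * (b * a * b⁻¹) * b⁻¹) * b⁻¹) * b⁻¹) * b⁻¹, b) : G × G) = (a, b)
    rw [key5 b a h2]
  -- divisibility facts
  have hd3 : 3 ∣ Nat.card N → 3 ∣ Nat.card S := by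
    intro hN3
    apply perm_pdvd 3 σ3 hσ3
    rintro ⟨⟨a, b⟩, h1, h2, h3⟩ heq
    have hab : a * b * a⁻¹ = b := congrArg (fun t : S => t.1.2) heq
    have hc : Commute a b := mul_inv_eq_iff_eq_mul.mp hab
    have hbot := N_bot hc h1 h2 h3
    rw [hNdef, hbot, Subgroup.card_bot] at hN3
    norm_num at hN3
  have hd5 : 5 ∣ Nat.card N → 5 ∣ Nat.card S := by
    intro hN5
    apply perm_pdvd 5 σ5 hσ5
    rintro ⟨⟨a, b⟩, h1, h2, h3⟩ heq
    have hab : b * a * b⁻¹ = a := congrArg (fun t : S => t.1.1) heq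
    have hc : Commute a b := (mul_inv_eq_iff_eq_mul.mp hab).symm
    have hbot := N_bot hc h1 h2 h3
    rw [hNdef, hbot, Subgroup.card_bot] at hN5
    norm_num at hN5
  -- arithmetic
  set n := Nat.card N
  set m := Nat.card S
  have hgd : Nat.gcd 15 n ∣ 15 := Nat.gcd_dvd_left _ _
  have hgn : Nat.gcd 15 n ∣ n := Nat.gcd_dvd_right _ _
  by_cases h3 : 3 ∣ n <;> by_cases h5 : 5 ∣ n
  · have h15 : (15 : ℕ) ∣ n := (Nat.coprime_iff_gcd_eq_one.mpr (by norm_num)).mul_dvd_of_dvd_of_dvd h3 h5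
    rw [Nat.gcd_eq_left h15]
    exact (Nat.coprime_iff_gcd_eq_one.mpr (by norm_num) :
      Nat.Coprime 3 5).mul_dvd_of_dvd_of_dvd (hd3 h3) (hd5 h5)
  · have hn5 : ¬ (5 ∣ Nat.gcd 15 n) := fun h => h5 (h.trans hgn)
    have hcop : Nat.Coprime (Nat.gcd 15 n) 5 :=
      ((Nat.Prime.coprime_iff_not_dvd (by norm_num)).mpr hn5).symm
    have : Nat.gcd 15 n ∣ 3 := hcop.dvd_of_dvd_mul_right (by simpa using hgd)
    exact this.trans (hd3 h3)
  · have hn3 : ¬ (3 ∣ Nat.gcd 15 n) := fun h => h3 (h.trans hgn)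
    have hcop : Nat.Coprime (Nat.gcd 15 n) 3 :=
      ((Nat.Prime.coprime_iff_not_dvd (by norm_num)).mpr hn3).symm
    have : Nat.gcd 15 n ∣ 5 := hcop.dvd_of_dvd_mul_right (by simpa [mul_comm] using hgd)
    exact this.trans (hd5 h5)
  · have hn5 : ¬ (5 ∣ Nat.gcd 15 n) := fun h => h5 (h.trans hgn)
    have hn3 : ¬ (3 ∣ Nat.gcd 15 n) := fun h => h3 (h.trans hgn)
    have hcop5 : Nat.Coprime (Nat.gcd 15 n) 5 :=
      ((Nat.Prime.coprime_iff_not_dvd (by norm_num)).mpr hn5).symm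
    have hcop3 : Nat.Coprime (Nat.gcd 15 n) 3 :=
      ((Nat.Prime.coprime_iff_not_dvd (by norm_num)).mpr hn3).symm
    have h1 : Nat.gcd 15 n ∣ 3 := hcop5.dvd_of_dvd_mul_right (by simpa using hgd)
    have h2 : Nat.gcd 15 n ∣ 1 := hcop3.dvd_of_dvd_mul_right (by simpa using h1)
    exact (Nat.dvd_one.mp h2) ▸ one_dvd m
end

section
/- Let G be a finite group and p a prime dividing |G|. The number of elements x in G with x^p = 1 is divisible by p. -/
/-!
McKay's argument: rotation permutes the `p`-tuples of elements of `G` with product `1`, of which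
there are `|G| ^ (p - 1)`, and its `p`-th power is the identity. Its fixed points are the constant
tuples `(x, …, x)` with `x ^ p = 1`, and a permutation of `p`-power order fixes as many points as
there are points, modulo `p`.
-/

namespace Equiv.Perm.VectorsProdEqOne

variable {G : Type*} [Group G] {n : ℕ}

def replicate (x : {x : G // x ^ n = 1}) : vectorsProdEqOne G n :=
  ⟨(⟨List.replicate n x, List.length_replicate⟩ : List.Vector G n),
    (List.prod_replicate n x.1).trans x.2⟩

theorem replicate_injective (hn : n ≠ 0) : Function.Injective (replicate (G := G) (n := n)) :=
  fun _ _ h => Subtype.ext <| (List.replicate_right_inj hn).mp (congrArg (·.1.1) h)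

def rotateOne : Function.End (vectorsProdEqOne G n) := (rotate · 1)

theorem rotateOne_pow_apply (v : vectorsProdEqOne G n) (k : ℕ) :
    (rotateOne ^ k) v = rotate v k := by
  induction k with
  | zero => exact (rotate_zero v).symm
  | succ k ih =>
    rw [pow_succ']
    change rotate ((rotateOne ^ k) v) 1 = _
    rw [ih, rotate_rotate]

theorem rotateOne_pow_self : (rotateOne : Function.End (vectorsProdEqOne G n)) ^ n = 1 :=
  funext fun v => (rotateOne_pow_apply v n).trans (rotate_length v)

theorem range_replicate :
    Set.range replicate =
      Function.fixedPoints (rotateOne : Function.End (vectorsProdEqOne G n)) := by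
  ext v
  constructor
  · rintro ⟨x, rfl⟩
    exact Subtype.ext (Subtype.ext (List.rotate_replicate _ _ _))
  · intro hv
    obtain ⟨x, hx⟩ := List.rotate_one_eq_self_iff_eq_replicate.mp (congrArg (·.1.1) hv)
    rw [v.1.2] at hx
    have hxn : x ^ n = 1 := by rw [← List.prod_replicate, ← hx]; exact v.2
    exact ⟨⟨x, hxn⟩, Subtype.ext (Subtype.ext hx.symm)⟩

end Equiv.Perm.VectorsProdEqOne

open Equiv.Perm Equiv.Perm.VectorsProdEqOne in
theorem card_pow_prime_eq_one_modEq {G : Type*} [Group G] [Fintype G] (p : ℕ)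
    [hp : Fact p.Prime] :
    Nat.card {x : G // x ^ p = 1} ≡ Fintype.card G ^ (p - 1) [MOD p] := by
  classical
  have hrot : (rotateOne : Function.End (vectorsProdEqOne G p)) ^ p ^ 1 = 1 := by
    rw [pow_one]; exact rotateOne_pow_self
  calc Nat.card {x : G // x ^ p = 1}
      = Nat.card (Function.fixedPoints (rotateOne : Function.End (vectorsProdEqOne G p))) := by
        rw [← range_replicate, Nat.card_range_of_injective (replicate_injective hp.out.ne_zero)]
    _ ≡ Nat.card (vectorsProdEqOne G p) [MOD p] := by
        simpa only [Fintype.card_eq_nat_card] using (card_fixedPoints_modEq hrot).symm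
    _ = Fintype.card G ^ (p - 1) := by rw [Nat.card_eq_fintype_card, card]

theorem stmt_10 (G : Type*) [Group G] [Fintype G] (p : ℕ) (hp : p.Prime)
    (hdvd : p ∣ Fintype.card G) :
    p ∣ Nat.card {x : G // x ^ p = 1} := by
  have := Fact.mk hp
  have hpow : Fintype.card G ^ (p - 1) ≡ 0 [MOD p] :=
    Nat.modEq_zero_iff_dvd.mpr (hdvd.trans (dvd_pow_self _ (Nat.sub_ne_zero_of_lt hp.one_lt)))
  exact Nat.modEq_zero_iff_dvd.mp ((card_pow_prime_eq_one_modEq p).trans hpow)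
end

section
/- Let F be a finitely generated group whose abelianization F/[F,F] is infinite, and let G be a finite group. Then the number of homomorphisms F → G is divisible by |G|. -/
/-!
Since `F^{ab}` is an infinite finitely generated abelian group, `F` surjects onto `ℤ`; the
surjection splits, so `F ≅ N ⋊ ℤ`, and a homomorphism `F → G` is a pair `(f, t)` with
`f : N →* G` and `t : G` such that `t • f = T f`, where `G` acts on `N →* G` by conjugation and
`T` is precomposition with the action of the generator of `ℤ`. As `T` is equivariant, the
admissible `t` for a given `f` are either none or a coset of the stabilizer of `f`, uniformly
along the orbit of `f`; so each orbit contributes `0` or `|orbit| * |stabilizer| = |G|` pairs.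
-/

open MulAction Multiplicative

namespace MulActionHom

variable {G X : Type*} [Group G] [MulAction G X] (T : X →[G] X)

def sameOrbit : SubMulAction G X where
  carrier := {x | T x ∈ orbit G x}
  smul_mem' g x hx := by
    rw [Set.mem_ofPred, map_smul, orbit_smul]
    exact mem_orbit_of_mem_orbit g hx

noncomputable def smulEqApplyEquiv :
    {p : X × G // p.2 • p.1 = T p.1} ≃ {p : T.sameOrbit × G // p.2 • p.1 = p.1} :=
  let g₀ (y : T.sameOrbit) : G := (mem_orbit_iff.mp y.2).choose
  have hg₀ (y : T.sameOrbit) : g₀ y • (y : X) = T y := (mem_orbit_iff.mp y.2).choose_spec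
  let y (p : {p : X × G // p.2 • p.1 = T p.1}) : T.sameOrbit :=
    ⟨p.1.1, mem_orbit_iff.mpr ⟨p.1.2, p.2⟩⟩
  { toFun p := ⟨(y p, (g₀ (y p))⁻¹ * p.1.2), by
      ext; simp [y, mul_smul, p.2, inv_smul_eq_iff, hg₀]⟩
    invFun p := ⟨(p.1.1, g₀ p.1.1 * p.1.2), by
      have := congrArg Subtype.val p.2
      simp only [SubMulAction.val_smul] at this
      simp [mul_smul, this, hg₀]⟩
    left_inv p := by simp [y]
    right_inv p := by simp [y] }

theorem card_dvd_card_smul_eq_apply :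
    Nat.card G ∣ Nat.card {p : X × G // p.2 • p.1 = T p.1} := by
  rw [Nat.card_congr (T.smulEqApplyEquiv.trans
      ((Equiv.prodComm _ G).subtypeEquiv (q := fun q => q.1 • q.2 = q.2) fun _ => Iff.rfl)),
    Nat.card_congr ((Equiv.subtypeProdEquivSigmaSubtype fun (g : G) (y : T.sameOrbit) =>
      g • y = y).trans (sigmaFixedByEquivOrbitsProdGroup G T.sameOrbit)), Nat.card_prod]
  exact dvd_mul_left _ _

end MulActionHom

theorem AddCommGroup.exists_surjective_int_of_infinite (A : Type*) [AddCommGroup A]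
    [AddGroup.FG A] [Infinite A] : ∃ f : A →+ ℤ, Function.Surjective f := by
  classical
  obtain ⟨n, ι, _, p, hp, e, ⟨f⟩⟩ := AddCommGroup.equiv_free_prod_directSum_zmod A
  rcases Nat.eq_zero_or_pos n with rfl | hn
  · have : ∀ i, NeZero (p i ^ e i) := fun i => ⟨pow_ne_zero _ (hp i).ne_zero⟩
    have : Finite (DirectSum ι fun i => ZMod (p i ^ e i)) := by
      unfold DirectSum; infer_instance
    exact (not_finite_iff_infinite.mpr ‹_› (Finite.of_equiv _ f.symm.toEquiv)).elim
  · refine ⟨(Finsupp.applyAddHom ⟨0, hn⟩).comp ((AddMonoidHom.fst _ _).comp f.toAddMonoidHom),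
      fun k => ⟨f.symm (Finsupp.single ⟨0, hn⟩ k, 0), by simp⟩⟩

theorem Group.exists_surjective_multiplicative_int (F : Type*) [Group F] [Group.FG F]
    [Infinite (Abelianization F)] : ∃ v : F →* Multiplicative ℤ, Function.Surjective v := by
  have : Group.FG (Abelianization F) := Group.fg_of_surjective (QuotientGroup.mk'_surjective _)
  obtain ⟨f, hf⟩ := AddCommGroup.exists_surjective_int_of_infinite (Additive (Abelianization F))
  exact ⟨f.toMultiplicativeRight.comp Abelianization.of, hf.comp (QuotientGroup.mk'_surjective _)⟩

@[simps]
def MonoidHom.kerExtension {F H : Type*} [Group F] [Group H] (v : F →* H)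
    (hv : Function.Surjective v) : GroupExtension v.ker F H where
  inl := v.ker.subtype
  rightHom := v
  inl_injective := Subtype.val_injective
  range_inl_eq_ker_rightHom := v.ker.range_subtype
  rightHom_surjective := hv

theorem MonoidHom.exists_mulEquiv_semidirectProduct_ker {F : Type*} [Group F]
    (v : F →* Multiplicative ℤ) (hv : Function.Surjective v) :
    ∃ φ : Multiplicative ℤ →* MulAut v.ker, Nonempty (v.ker ⋊[φ] Multiplicative ℤ ≃* F) := by
  obtain ⟨z, hz⟩ := hv (ofAdd 1)
  let s : (v.kerExtension hv).Splitting :=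
    { zpowersHom F z with
      rightInverse_rightHom k := by simp [← ofAdd_zsmul, hz] }
  exact ⟨_, ⟨s.semidirectProductMulEquiv⟩⟩

abbrev MonoidHom.conjMulAction (N G : Type*) [Group N] [Group G] : MulAction G (N →* G) where
  smul g f := (MulAut.conj g).toMonoidHom.comp f
  one_smul f := by ext; simp [HSMul.hSMul]
  mul_smul g h f := by ext; simp [HSMul.hSMul, mul_assoc]

attribute [local instance] MonoidHom.conjMulAction

section ConjAction

variable {N G : Type*} [Group N] [Group G]

lemma MonoidHom.apply_zpow_apply_eq_conj (f : N →* G) {α : MulAut N} {t : G}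
    (h : ∀ n, f (α n) = t * f n * t⁻¹) (m : ℤ) (n : N) :
    f ((α ^ m) n) = t ^ m * f n * (t ^ m)⁻¹ := by
  have h_inv (n : N) : f (α⁻¹ n) = t⁻¹ * f n * t := by
    conv_rhs => rw [← MulAut.apply_inv_self N α n, h]
    group
  induction m using Int.induction_on generalizing n with
  | zero => simp
  | succ k ih => rw [zpow_add_one, MulAut.mul_apply, ih, h, zpow_add_one]; group
  | pred k ih => rw [zpow_sub_one, MulAut.mul_apply, ih, h_inv, zpow_sub_one]; group

lemma MonoidHom.conj_smul_apply (g : G) (f : N →* G) (n : N) : (g • f) n = g * f n * g⁻¹ :=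
  rfl

@[simps]
def MonoidHom.compRightMulActionHom (κ : N →* N) : (N →* G) →[G] (N →* G) where
  toFun f := f.comp κ
  map_smul' _ _ := rfl

def SemidirectProduct.monoidHomEquiv (φ : Multiplicative ℤ →* MulAut N) :
    (N ⋊[φ] Multiplicative ℤ →* G) ≃
      {p : (N →* G) × G // p.2 • p.1 = (φ (ofAdd 1)).toMonoidHom.compRightMulActionHom p.1} where
  toFun Φ := ⟨(Φ.comp inl, Φ (inr (ofAdd 1))), by
    ext n; simp [MonoidHom.conj_smul_apply, inl_aut]⟩
  invFun p := lift p.1.1 (zpowersHom G p.1.2) fun k => by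
    ext n
    have h n : p.1.1 (φ (ofAdd 1) n) = p.1.2 * p.1.1 n * p.1.2⁻¹ :=
      (DFunLike.congr_fun p.2 n).symm
    simpa [← map_zpow, ← ofAdd_zsmul] using p.1.1.apply_zpow_apply_eq_conj h k.toAdd n
  left_inv Φ := hom_ext (lift_comp_inl ..) (MonoidHom.ext_mint (by simp))
  right_inv p := by ext <;> simp

end ConjAction

theorem stmt_13 (F : Type*) [Group F] [Group.FG F] [Infinite (Abelianization F)]
    (G : Type*) [Group G] [Fintype G] :
    Fintype.card G ∣ Nat.card (F →* G) := by
  obtain ⟨v, hv⟩ := Group.exists_surjective_multiplicative_int F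
  obtain ⟨φ, ⟨e⟩⟩ := v.exists_mulEquiv_semidirectProduct_ker hv
  rw [Fintype.card_eq_nat_card, ← Nat.card_congr (e.monoidHomCongrLeftEquiv (N := G)),
    Nat.card_congr (SemidirectProduct.monoidHomEquiv φ)]
  exact MulActionHom.card_dvd_card_smul_eq_apply _
end

section
/- Let G be a finite group, H a subgroup of G, and n an integer divisible by |H|. Suppose Φ is a set of homomorphisms from an n-indexed group F (a group with a fixed surjection deg: F → Z/nZ) to G such that: (I) Φ is closed under conjugation by elements of H; (II) for any φ ∈ Φ and any h in the φ-core H_φ = (⋂_{f∈F} H^{φ(f)}) ∩ C(φ(ker deg)), the homomorphism ψ agreeing with φ on ker deg and sending a fixed degree-one element f to φ(f)h belongs to Φ. Then |Φ| is divisible by |H|. -/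
set_option linter.unusedSectionVars false
set_option maxHeartbeats 1000000

/-- The φ-core of a subgroup `H` with respect to a homomorphism `φ : F →* G`, where
`F` is an `n`-indexed group via `deg : F →* Multiplicative (ZMod n)`: the set of `h ∈ H`
such that `h^{φ f} ∈ H` for all `f`, and `h^{φ f} = h` whenever `deg f = 0`. -/
def phiCore {F G : Type*} [Group F] [Group G] {n : ℕ}
    (H : Subgroup G) (deg : F →* Multiplicative (ZMod n)) (φ : F →* G) : Set G :=
  {h : G | h ∈ H ∧ (∀ f : F, (φ f)⁻¹ * h * φ f ∈ H) ∧
    ∀ f : F, deg f = 1 → (φ f)⁻¹ * h * φ f = h}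

open Subgroup


private theorem perm_order_dvd {X : Type*} [Fintype X] [DecidableEq X]
    (σ : Equiv.Perm X) {p j a : ℕ} (pp : p.Prime)
    (hσ : orderOf σ = p ^ j) (hcard : Fintype.card X ≤ p ^ a) :
    σ ^ p ^ a = 1 := by
  refine orderOf_dvd_iff_pow_eq_one.mp ?_
  rw [← Equiv.Perm.lcm_cycleType]
  refine Multiset.lcm_dvd.mpr ?_
  intro ℓ hℓ
  have h1 : ℓ ∣ p ^ j := by
    rw [← hσ, ← Equiv.Perm.lcm_cycleType]; exact Multiset.dvd_lcm hℓ
  obtain ⟨i, hi, rfl⟩ := (Nat.dvd_prime_pow pp).mp h1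
  have h2 : p ^ i ≤ p ^ a := by
    calc p ^ i ≤ σ.support.card := by
          rw [← Equiv.Perm.sum_cycleType]
          exact Multiset.single_le_sum (fun x _ => Nat.zero_le x) _ hℓ
      _ ≤ Fintype.card X := Finset.card_le_univ _
      _ ≤ p ^ a := hcard
  exact pow_dvd_pow p ((Nat.pow_le_pow_iff_right pp.one_lt).mp h2)

private theorem sdp_pow_eq_one {T : Type*} [Group T] [Finite T] {n : ℕ} [NeZero n]
    {φα : Multiplicative (ZMod n) →* MulAut T} (hTn : Nat.card T ∣ n)
    (x : SemidirectProduct T (Multiplicative (ZMod n)) φα)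
    (hx : x.right = Multiplicative.ofAdd 1) : x ^ n = 1 := by
  classical
  have hn0 : n ≠ 0 := NeZero.ne n
  have hEquiv : SemidirectProduct T (Multiplicative (ZMod n)) φα ≃ T × Multiplicative (ZMod n) :=
    ⟨fun e => (e.left, e.right), fun p => ⟨p.1, p.2⟩, fun e => rfl, fun p => rfl⟩
  haveI : Finite (SemidirectProduct T (Multiplicative (ZMod n)) φα) :=
    Finite.of_equiv _ hEquiv.symm
  have hcardT0 : Nat.card T ≠ 0 := Nat.card_pos.ne'
  have hcardE : Nat.card (SemidirectProduct T (Multiplicative (ZMod n)) φα)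
      = Nat.card T * n := by
    rw [Nat.card_congr hEquiv, Nat.card_prod]
    congr 1
    rw [Nat.card_congr Multiplicative.toAdd, Nat.card_zmod]
  have hm0 : orderOf x ≠ 0 := (orderOf_pos x).ne'
  set m := orderOf x with hm
  have hnm : n ∣ m := by
    have h1 : orderOf (SemidirectProduct.rightHom x) ∣ m := orderOf_map_dvd _ x
    have h2 : SemidirectProduct.rightHom x = Multiplicative.ofAdd 1 := hx
    rwa [h2, orderOf_ofAdd_eq_addOrderOf, ZMod.addOrderOf_one] at h1
  suffices hdvd : m ∣ n by
    exact orderOf_dvd_iff_pow_eq_one.mp hdvd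
  rw [← Nat.factorization_le_iff_dvd hm0 hn0]
  intro p
  by_cases hp : p.Prime
  swap
  · simp [Nat.factorization_eq_zero_of_not_prime _ hp]
  haveI : Fact p.Prime := ⟨hp⟩
  by_contra hlt
  push_neg at hlt
  set a := n.factorization p with ha
  set k := m.factorization p with hk
  -- the p-part u of x
  have hpk : p ^ k ∣ m := Nat.ordProj_dvd m p
  obtain ⟨m₀, hm₀⟩ := id hpk
  have hm₀0 : m₀ ≠ 0 := by rintro rfl; simp [hm₀] at hm0
  have hppos : 0 < p ^ k := pow_pos hp.pos k
  have hdiv : m / p ^ k = m₀ := by rw [hm₀, Nat.mul_div_cancel_left _ hppos]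
  set u : SemidirectProduct T (Multiplicative (ZMod n)) φα := x ^ m₀ with hu
  have hordu : orderOf u = p ^ k := by
    rw [hu, orderOf_pow, ← hm, ← hdiv, Nat.gcd_eq_right (Nat.div_dvd_of_dvd hpk),
      Nat.div_div_self hpk hm0]
  -- the complement p-part γp
  have hpa : p ^ a ∣ n := Nat.ordProj_dvd n p
  set w : Multiplicative (ZMod n) := Multiplicative.ofAdd ((n / p ^ a : ℕ) : ZMod n) with hw
  set γp : SemidirectProduct T (Multiplicative (ZMod n)) φα := SemidirectProduct.inr w with hγp
  have hordγ : orderOf γp = p ^ a := by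
    rw [hγp, orderOf_injective SemidirectProduct.inr SemidirectProduct.inr_injective,
      hw, orderOf_ofAdd_eq_addOrderOf, ZMod.addOrderOf_coe _ hn0,
      Nat.gcd_eq_right (Nat.div_dvd_of_dvd hpa), Nat.div_div_self hpa hn0]
  -- Sylow subgroups
  obtain ⟨Q, hQ⟩ := (IsPGroup.of_card ((Nat.card_zpowers u).trans hordu)).exists_le_sylow (p := p)
  obtain ⟨Q', hQ'⟩ :=
    (IsPGroup.of_card ((Nat.card_zpowers γp).trans hordγ)).exists_le_sylow (p := p)
  obtain ⟨g, hg⟩ := MulAction.exists_smul_eq (SemidirectProduct T (Multiplicative (ZMod n)) φα) Q Q'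
  set u₁ : SemidirectProduct T (Multiplicative (ZMod n)) φα := g * u * g⁻¹ with hu₁
  have hu₁Q' : u₁ ∈ (Q' : Subgroup (SemidirectProduct T (Multiplicative (ZMod n)) φα)) := by
    rw [← hg, Sylow.coe_subgroup_smul]
    refine Subgroup.mem_pointwise_smul_iff_inv_smul_mem.mpr ?_
    have : (MulAut.conj g)⁻¹ • u₁ = u := by
      simp [hu₁, MulAut.smul_def, mul_assoc]
    rw [this]
    exact hQ (Subgroup.mem_zpowers u)
  have hordu₁ : orderOf u₁ = p ^ k := by
    have h4 : u₁ = (MulAut.conj g) u := by simp [hu₁, MulAut.conj_apply]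
    rw [h4, MulEquiv.orderOf_eq, hordu]
  -- the right component of u₁ ^ p ^ a is trivial
  have hdvdN : n ∣ m₀ * p ^ a := by
    have hm₀pa0 : m₀ * p ^ a ≠ 0 := Nat.mul_ne_zero hm₀0 (pow_pos hp.pos a).ne'
    rw [← Nat.factorization_le_iff_dvd hn0 hm₀pa0]
    intro q
    rw [Nat.factorization_mul hm₀0 (pow_pos hp.pos a).ne', Finsupp.add_apply,
      hp.factorization_pow, Finsupp.single_apply]
    rcases eq_or_ne p q with rfl | hq
    · rw [if_pos rfl, ← ha]
      exact Nat.le_add_left _ _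
    · have h1 : n.factorization q ≤ m.factorization q :=
        (Nat.factorization_le_iff_dvd hn0 hm0).mpr hnm q
      have h2 : m.factorization q = m₀.factorization q := by
        rw [hm₀, Nat.factorization_mul (pow_pos hp.pos k).ne' hm₀0, Finsupp.add_apply,
          hp.factorization_pow, Finsupp.single_apply, if_neg hq, zero_add]
      rw [if_neg hq, add_zero]
      omega
  have hrh : SemidirectProduct.rightHom (u₁ ^ p ^ a) = 1 := by
    have h3 : SemidirectProduct.rightHom x = Multiplicative.ofAdd 1 := hx
    rw [map_pow, hu₁, map_mul, map_mul, map_inv, hu, map_pow, h3]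
    rw [mul_comm (SemidirectProduct.rightHom g), mul_assoc, mul_inv_cancel, mul_one]
    rw [← pow_mul, ← ofAdd_nsmul]
    have h10 : ((m₀ * p ^ a) • (1 : ZMod n)) = 0 := by
      rw [nsmul_eq_mul, mul_one]
      exact (ZMod.natCast_eq_zero_iff _ _).mpr hdvdN
    rw [h10, ofAdd_zero]
  -- cardinalities
  set b := (Nat.card T).factorization p with hb
  have hba : b ≤ a := (Nat.factorization_le_iff_dvd hcardT0 hn0).mpr hTn p
  have hcardQ' : Nat.card (Q' : Subgroup (SemidirectProduct T (Multiplicative (ZMod n)) φα)) = p ^ (b + a) := by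
    rw [Q'.card_eq_multiplicity, hcardE, Nat.factorization_mul hcardT0 hn0, Finsupp.add_apply]
  set Γ : Subgroup (SemidirectProduct T (Multiplicative (ZMod n)) φα) := Subgroup.zpowers γp with hΓ
  have hΓQ' : Γ ≤ (Q' : Subgroup (SemidirectProduct T (Multiplicative (ZMod n)) φα)) := hQ'
  set X := (Q' : Subgroup (SemidirectProduct T (Multiplicative (ZMod n)) φα)) ⧸ (Γ.subgroupOf (Q' : Subgroup (SemidirectProduct T (Multiplicative (ZMod n)) φα))) with hX
  have hcardΓ' : Nat.card (Γ.subgroupOf (Q' : Subgroup (SemidirectProduct T (Multiplicative (ZMod n)) φα))) = p ^ a := by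
    rw [Nat.card_congr (Subgroup.subgroupOfEquivOfLe hΓQ').toEquiv, hΓ, Nat.card_zpowers, hordγ]
  have hcardX : Nat.card X = p ^ b := by
    have h1 := Subgroup.card_eq_card_quotient_mul_card_subgroup (Γ.subgroupOf (Q' : Subgroup (SemidirectProduct T (Multiplicative (ZMod n)) φα)))
    rw [hcardQ', hcardΓ', pow_add] at h1
    exact (Nat.eq_of_mul_eq_mul_right (pow_pos hp.pos a) h1.symm)
  -- the permutation action
  haveI : Fintype X := Fintype.ofFinite X
  set y : (Q' : Subgroup (SemidirectProduct T (Multiplicative (ZMod n)) φα)) := ⟨u₁, hu₁Q'⟩ with hy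
  set σ := MulAction.toPermHom (Q' : Subgroup (SemidirectProduct T (Multiplicative (ZMod n)) φα)) X y with hσ
  have hordy : orderOf y = p ^ k := by
    rw [← hordu₁]
    exact (orderOf_injective (Q' : Subgroup (SemidirectProduct T (Multiplicative (ZMod n)) φα)).subtype Subtype.coe_injective y).symm
  obtain ⟨j, hj, hordσ⟩ := (Nat.dvd_prime_pow hp).mp
    (hordy ▸ orderOf_map_dvd (MulAction.toPermHom (Q' : Subgroup (SemidirectProduct T (Multiplicative (ZMod n)) φα)) X) y)
  have hXle : Fintype.card X ≤ p ^ a := by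
    rw [← Nat.card_eq_fintype_card, hcardX]
    exact Nat.pow_le_pow_right hp.pos hba
  have hσpa : σ ^ p ^ a = 1 := perm_order_dvd σ hp hordσ hXle
  -- conclude y ^ p ^ a stabilizes the trivial coset
  have hall : ∀ z : X, (y ^ p ^ a) • z = z := by
    intro z
    have h8 : MulAction.toPermHom _ X (y ^ p ^ a) = 1 := by
      rw [map_pow]; exact hσpa
    calc (y ^ p ^ a) • z = (MulAction.toPermHom _ X (y ^ p ^ a)) z := rfl
      _ = z := by rw [h8]; rfl
  have hyΓ : y ^ p ^ a ∈ Γ.subgroupOf (Q' : Subgroup (SemidirectProduct T (Multiplicative (ZMod n)) φα)) := by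
    have h9 := hall (QuotientGroup.mk 1)
    rw [MulAction.Quotient.smul_mk] at h9
    have h5 := (QuotientGroup.eq).mp h9
    simpa using (Subgroup.inv_mem_iff _).mp (by simpa using h5)
  have hu₁Γ : u₁ ^ p ^ a ∈ Γ := by
    have := (Subgroup.mem_subgroupOf).mp hyΓ
    simpa using this
  -- and lies in the kernel of rightHom; hence trivial
  have hu₁triv : u₁ ^ p ^ a = 1 := by
    obtain ⟨i, hi⟩ := Subgroup.mem_zpowers_iff.mp hu₁Γ
    have h6 : γp ^ i = SemidirectProduct.inr (w ^ i) := by rw [hγp, map_zpow]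
    have h7 : w ^ i = 1 := by
      have := congrArg SemidirectProduct.rightHom hi
      rwa [h6, SemidirectProduct.rightHom_inr, hrh] at this
    rw [← hi, h6, h7, map_one]
  have : p ^ k ∣ p ^ a := hordu₁ ▸ orderOf_dvd_of_pow_eq_one hu₁triv
  have : k ≤ a := (Nat.pow_dvd_pow_iff_le_right hp.one_lt).mp this
  omega

private theorem coset_pow_eq_one {G : Type*} [Group G] (T : Subgroup G) [Finite T]
    {n : ℕ} [NeZero n] {c : G}
    (hc1 : ∀ t ∈ T, c * t * c⁻¹ ∈ T) (hc2 : ∀ t ∈ T, c⁻¹ * t * c ∈ T)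
    (hcn : ∀ t ∈ T, c ^ n * t = t * c ^ n)
    (hTn : Nat.card T ∣ n) {h : G} (hh : h ∈ T) : (c * h) ^ n = c ^ n := by
  have hn0 : n ≠ 0 := NeZero.ne n
  -- the conjugation automorphism of T
  set β : T ≃* T :=
    { toFun := fun t => ⟨c * t * c⁻¹, hc1 t t.2⟩
      invFun := fun t => ⟨c⁻¹ * t * c, hc2 t t.2⟩
      left_inv := fun t => by ext; simp [mul_assoc]
      right_inv := fun t => by ext; simp [mul_assoc]
      map_mul' := fun t s => by ext; simp [mul_assoc] } with hβ
  have hLco : ∀ (v : ℕ) (t : T), (((β ^ v : T ≃* T) t : T) : G) = c ^ v * t * (c ^ v)⁻¹ := by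
    intro v
    induction v with
    | zero => intro t; simp
    | succ v ih =>
      intro t
      have h1 : (β ^ (v + 1) : T ≃* T) t = (β ^ v : T ≃* T) (β t) := by
        rw [pow_succ]; rfl
      rw [h1, ih]
      have h2 : ((β t : T) : G) = c * t * c⁻¹ := rfl
      rw [h2]
      simp [pow_succ, mul_assoc]
  have hβn : (β ^ n : T ≃* T) = 1 := by
    ext t
    have h2 := hLco n t
    rw [h2]
    have h3 := hcn t t.2
    have h2' : (((1 : T ≃* T) t : T) : G) = (t : G) := rfl
    rw [h2', h3, mul_assoc]
    simp
  have hkey : ∀ v w : ℕ, v % n = w % n → (β ^ v : T ≃* T) = β ^ w := by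
    have haux : ∀ v : ℕ, (β ^ v : T ≃* T) = β ^ (v % n) := by
      intro v
      conv_lhs => rw [← Nat.div_add_mod v n]
      rw [pow_add, pow_mul, hβn, one_pow, one_mul]
    intro v w hvw
    rw [haux v, haux w, hvw]
  -- the homomorphism ZMod n →* MulAut T
  set φα : Multiplicative (ZMod n) →* MulAut T :=
    { toFun := fun mm => β ^ (mm.toAdd.val)
      map_one' := by
        show (β ^ ((Multiplicative.toAdd (1 : Multiplicative (ZMod n))).val) : MulAut T) = 1
        rw [toAdd_one, ZMod.val_zero, pow_zero]
      map_mul' := fun A B => by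
        show (β ^ ((Multiplicative.toAdd (A * B)).val) : MulAut T)
          = β ^ ((Multiplicative.toAdd A).val) * β ^ ((Multiplicative.toAdd B).val)
        rw [toAdd_mul, ← pow_add]
        exact hkey _ _ (by
          rw [ZMod.val_add]
          exact Nat.mod_mod_of_dvd _ (dvd_refl n)) } with hφα
  set x : SemidirectProduct T (Multiplicative (ZMod n)) φα :=
    ⟨⟨c * h * c⁻¹, hc1 h hh⟩, Multiplicative.ofAdd 1⟩ with hx
  have hL1 : ∀ v : ℕ, ((x ^ v).left : G) * c ^ v = (c * h) ^ v := by
    intro v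
    induction v with
    | zero => simp [SemidirectProduct.one_left]
    | succ v ih =>
      have h6 : x ^ (v + 1) = x ^ v * x := pow_succ x v
      have h7 : (x ^ v * x).left = (x ^ v).left * φα ((x ^ v).right) x.left :=
        SemidirectProduct.mul_left _ _
      have h8 : (x ^ v).right = (Multiplicative.ofAdd (1 : ZMod n)) ^ v := by
        have : (x ^ v).right = SemidirectProduct.rightHom (x ^ v) := rfl
        rw [this, map_pow]
        rfl
      have h9 : φα ((Multiplicative.ofAdd (1 : ZMod n)) ^ v) = (β ^ v : MulAut T) := by
        show (β ^ ((((Multiplicative.ofAdd (1 : ZMod n)) ^ v).toAdd).val) : MulAut T) = β ^ v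
        have h10 : ((Multiplicative.ofAdd (1 : ZMod n)) ^ v).toAdd = (v : ZMod n) := by
          rw [toAdd_pow, toAdd_ofAdd]
          simp
        rw [h10, ZMod.val_natCast]
        exact hkey _ _ (Nat.mod_mod_of_dvd _ (dvd_refl n))
      have h11 : ((φα ((x ^ v).right) x.left : T) : G) = c ^ v * (c * h * c⁻¹) * (c ^ v)⁻¹ := by
        rw [h8, h9]
        exact hLco v _
      have h12 : ((x ^ (v + 1)).left : G) = ((x ^ v).left : G) * (c ^ v * (c * h * c⁻¹) * (c ^ v)⁻¹) := by
        rw [h6, h7]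
        push_cast [h11]
        rfl
      rw [h12, pow_succ (c * h) v, ← ih]
      group
  have hxn : x ^ n = 1 := sdp_pow_eq_one hTn x rfl
  have := hL1 n
  rw [hxn] at this
  simpa using this.symm

section core

variable {F G : Type*} [Group F] [Group G] {n : ℕ} [NeZero n]
variable (H : Subgroup G) (deg : F →* Multiplicative (ZMod n))

private def coreSubgroup (φ : F →* G) : Subgroup G where
  carrier := phiCore H deg φ
  one_mem' := ⟨H.one_mem, fun f => by simpa using H.one_mem, fun f _ => by simp⟩
  mul_mem' := by
    rintro a b ⟨ha1, ha2, ha3⟩ ⟨hb1, hb2, hb3⟩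
    refine ⟨H.mul_mem ha1 hb1, fun f => ?_, fun f hf => ?_⟩
    · have e : (φ f)⁻¹ * (a * b) * φ f = ((φ f)⁻¹ * a * φ f) * ((φ f)⁻¹ * b * φ f) := by group
      rw [e]; exact H.mul_mem (ha2 f) (hb2 f)
    · have e : (φ f)⁻¹ * (a * b) * φ f = ((φ f)⁻¹ * a * φ f) * ((φ f)⁻¹ * b * φ f) := by group
      rw [e, ha3 f hf, hb3 f hf]
  inv_mem' := by
    rintro a ⟨ha1, ha2, ha3⟩
    refine ⟨H.inv_mem ha1, fun f => ?_, fun f hf => ?_⟩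
    · have e : (φ f)⁻¹ * a⁻¹ * φ f = ((φ f)⁻¹ * a * φ f)⁻¹ := by group
      rw [e]; exact H.inv_mem (ha2 f)
    · have e : (φ f)⁻¹ * a⁻¹ * φ f = ((φ f)⁻¹ * a * φ f)⁻¹ := by group
      rw [e, ha3 f hf]

private lemma mem_coreSubgroup {φ : F →* G} {x : G} :
    x ∈ coreSubgroup H deg φ ↔ x ∈ phiCore H deg φ := Iff.rfl

private lemma core_conj_mem {φ : F →* G} {x : G} (hx : x ∈ phiCore H deg φ) (f : F) :
    (φ f)⁻¹ * x * φ f ∈ phiCore H deg φ := by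
  obtain ⟨h1, h2, h3⟩ := hx
  refine ⟨h2 f, fun g => ?_, fun g hg => ?_⟩
  · have e1 : (φ g)⁻¹ * ((φ f)⁻¹ * x * φ f) * φ g = (φ (f * g))⁻¹ * x * φ (f * g) := by
      rw [map_mul]; group
    rw [e1]; exact h2 (f * g)
  · have e1 : (φ g)⁻¹ * ((φ f)⁻¹ * x * φ f) * φ g = (φ (f * g))⁻¹ * x * φ (f * g) := by
      rw [map_mul]; group
    have e3 : deg (f * g * f⁻¹) = 1 := by
      rw [map_mul, map_mul, map_inv, hg, mul_comm]
      group
    have e4 : φ (f * g) = φ (f * g * f⁻¹) * φ f := by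
      rw [← map_mul]
      congr 1
      group
    have e5 : (φ (f * g * f⁻¹) * φ f)⁻¹ * x * (φ (f * g * f⁻¹) * φ f)
        = (φ f)⁻¹ * ((φ (f * g * f⁻¹))⁻¹ * x * φ (f * g * f⁻¹)) * φ f := by group
    rw [e1, e4, e5, h3 _ e3]

private lemma core_conj_self {φ : F →* G} {z h0 : G} (hz : z ∈ phiCore H deg φ)
    (hh0 : h0 ∈ phiCore H deg φ) : h0⁻¹ * z * h0 ∈ phiCore H deg φ := by
  have := mul_mem (mul_mem ((coreSubgroup H deg φ).inv_mem (mem_coreSubgroup H deg |>.mpr hh0))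
    (mem_coreSubgroup H deg |>.mpr hz)) (mem_coreSubgroup H deg |>.mpr hh0)
  exact (mem_coreSubgroup H deg).mp this

private def vdeg (deg : F →* Multiplicative (ZMod n)) (f : F) : ℕ :=
  (Multiplicative.toAdd (deg f)).val

variable {f₁ : F}

private lemma deg_ker_decomp (hf₁ : deg f₁ = Multiplicative.ofAdd (1 : ZMod n)) (f : F) :
    deg (f * (f₁ ^ (vdeg deg f))⁻¹) = 1 := by
  rw [map_mul, map_inv, map_pow, hf₁, ← ofAdd_nsmul]
  have h1 : ((vdeg deg f) • (1 : ZMod n)) = Multiplicative.toAdd (deg f) := by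
    rw [nsmul_eq_mul, mul_one]
    exact ZMod.natCast_rightInverse _
  rw [h1]
  simp

private lemma phi_decomp (φ : F →* G) (f : F) :
    φ f = φ (f * (f₁ ^ (vdeg deg f))⁻¹) * (φ f₁) ^ (vdeg deg f) := by
  rw [← map_pow, ← map_mul]
  congr 1
  group

private lemma hom_determined {φ ψ : F →* G}
    (hf₁ : deg f₁ = Multiplicative.ofAdd (1 : ZMod n))
    (hagree : ∀ f, deg f = 1 → ψ f = φ f) (hval : ψ f₁ = φ f₁) : ψ = φ := by
  ext f
  rw [phi_decomp deg ψ f, phi_decomp deg φ f, hagree _ (deg_ker_decomp deg hf₁ f), hval]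

private lemma chpow_conj_mem {φ : F →* G} {x h0 : G} (hx : x ∈ phiCore H deg φ)
    (hh0 : h0 ∈ phiCore H deg φ) (v : ℕ) :
    ((φ f₁ * h0) ^ v)⁻¹ * x * (φ f₁ * h0) ^ v ∈ phiCore H deg φ := by
  induction v with
  | zero => simpa using hx
  | succ v ih =>
    have e : ((φ f₁ * h0) ^ (v + 1))⁻¹ * x * (φ f₁ * h0) ^ (v + 1)
        = h0⁻¹ * ((φ f₁)⁻¹ * (((φ f₁ * h0) ^ v)⁻¹ * x * (φ f₁ * h0) ^ v) * φ f₁) * h0 := by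
      rw [pow_succ]; group
    rw [e]
    exact core_conj_self H deg (core_conj_mem H deg ih f₁) hh0

private lemma eval_conj {φ ψ : F →* G}
    (hf₁ : deg f₁ = Multiplicative.ofAdd (1 : ZMod n))
    (hagree : ∀ f, deg f = 1 → ψ f = φ f) {x : G} (hx : x ∈ phiCore H deg φ) (f : F) :
    (ψ f)⁻¹ * x * ψ f = ((ψ f₁) ^ (vdeg deg f))⁻¹ * x * (ψ f₁) ^ (vdeg deg f) := by
  have h1 : ψ f = φ (f * (f₁ ^ (vdeg deg f))⁻¹) * (ψ f₁) ^ (vdeg deg f) := by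
    rw [phi_decomp deg ψ f, hagree _ (deg_ker_decomp deg hf₁ f)]
  rw [h1]
  have e5 : ∀ A B : G, (A * B)⁻¹ * x * (A * B) = B⁻¹ * (A⁻¹ * x * A) * B := by
    intro A B; group
  rw [e5, hx.2.2 _ (deg_ker_decomp deg hf₁ f)]

private lemma core_le_core {φ ψ : F →* G}
    (hf₁ : deg f₁ = Multiplicative.ofAdd (1 : ZMod n))
    (hagree : ∀ f, deg f = 1 → ψ f = φ f)
    (hh0 : (φ f₁)⁻¹ * ψ f₁ ∈ phiCore H deg φ) :
    phiCore H deg φ ⊆ phiCore H deg ψ := by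
  intro x hx
  have hψf₁ : ψ f₁ = φ f₁ * ((φ f₁)⁻¹ * ψ f₁) := by group
  refine ⟨hx.1, fun f => ?_, fun f hf => ?_⟩
  · rw [eval_conj H deg hf₁ hagree hx f, hψf₁]
    exact (chpow_conj_mem H deg hx hh0 (vdeg deg f)).1
  · rw [eval_conj H deg hf₁ hagree hx f]
    have hv : vdeg deg f = 0 := by
      unfold vdeg
      rw [hf, toAdd_one, ZMod.val_zero]
    rw [hv]
    simp

private lemma core_eq_core {φ ψ : F →* G}
    (hf₁ : deg f₁ = Multiplicative.ofAdd (1 : ZMod n))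
    (hagree : ∀ f, deg f = 1 → ψ f = φ f)
    (hh0 : (φ f₁)⁻¹ * ψ f₁ ∈ phiCore H deg φ) :
    phiCore H deg φ = phiCore H deg ψ := by
  refine subset_antisymm (core_le_core H deg hf₁ hagree hh0) ?_
  have h1 : (ψ f₁)⁻¹ * φ f₁ ∈ phiCore H deg ψ := by
    have h2 : ((φ f₁)⁻¹ * ψ f₁)⁻¹ ∈ phiCore H deg φ :=
      (mem_coreSubgroup H deg).mp ((coreSubgroup H deg φ).inv_mem
        ((mem_coreSubgroup H deg).mpr hh0))
    have h3 := core_le_core H deg hf₁ hagree hh0 h2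
    have e : ((φ f₁)⁻¹ * ψ f₁)⁻¹ = (ψ f₁)⁻¹ * φ f₁ := by group
    rwa [e] at h3
  exact core_le_core H deg hf₁ (fun f hf => (hagree f hf).symm) h1

private lemma vdeg_mul_mod (f g : F) :
    vdeg deg (f * g) % n = (vdeg deg f + vdeg deg g) % n := by
  unfold vdeg
  rw [map_mul, toAdd_mul, ZMod.val_add, Nat.mod_mod_of_dvd _ (dvd_refl n)]

/-- The modified homomorphism agreeing with `φ` on `ker deg` and sending `f₁` to `x`. -/
private def buildHom (φ : F →* G) (x : G)
    (hf₁ : deg f₁ = Multiplicative.ofAdd (1 : ZMod n))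
    (hxn : x ^ n = (φ f₁) ^ n)
    (hcore : (φ f₁)⁻¹ * x ∈ phiCore H deg φ) : F →* G where
  toFun f := φ f * (((φ f₁) ^ (vdeg deg f))⁻¹ * x ^ (vdeg deg f))
  map_one' := by
    have hv : vdeg deg (1 : F) = 0 := by
      unfold vdeg
      rw [map_one, toAdd_one, ZMod.val_zero]
    show φ (1 : F) * (((φ f₁) ^ (vdeg deg (1 : F)))⁻¹ * x ^ (vdeg deg (1 : F))) = 1
    rw [hv]
    simp
  map_mul' := by
    have hDwrap : ∀ v : ℕ,
        (((φ f₁) ^ v)⁻¹ : G) * x ^ v = ((φ f₁) ^ (v % n))⁻¹ * x ^ (v % n) := by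
      intro v
      conv_lhs => rw [← Nat.div_add_mod v n]
      rw [pow_add, pow_add, mul_inv_rev]
      have hxnq : x ^ (n * (v / n)) = (φ f₁) ^ (n * (v / n)) := by
        rw [pow_mul, pow_mul, hxn]
      calc ((φ f₁) ^ (v % n))⁻¹ * ((φ f₁) ^ (n * (v / n)))⁻¹ * (x ^ (n * (v / n)) * x ^ (v % n))
          = ((φ f₁) ^ (v % n))⁻¹ * (((φ f₁) ^ (n * (v / n)))⁻¹ * x ^ (n * (v / n))) * x ^ (v % n) := by
            group
        _ = ((φ f₁) ^ (v % n))⁻¹ * x ^ (v % n) := by rw [hxnq]; group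
    have hDmem : ∀ v : ℕ, ((φ f₁) ^ v)⁻¹ * x ^ v ∈ phiCore H deg φ := by
      intro v
      induction v with
      | zero =>
        simpa using (mem_coreSubgroup H deg).mp (coreSubgroup H deg φ).one_mem
      | succ v ih =>
        have e : ((φ f₁) ^ (v + 1))⁻¹ * x ^ (v + 1)
            = ((φ f₁)⁻¹ * (((φ f₁) ^ v)⁻¹ * x ^ v) * φ f₁) * ((φ f₁)⁻¹ * x) := by
          rw [pow_succ, pow_succ]; group
        rw [e]
        exact (mem_coreSubgroup H deg).mp (mul_mem
          ((mem_coreSubgroup H deg).mpr (core_conj_mem H deg ih f₁))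
          ((mem_coreSubgroup H deg).mpr hcore))
    intro f g
    have h2 := eval_conj H deg hf₁ (fun f _ => rfl) (hDmem (vdeg deg f)) g
    calc φ (f * g) * (((φ f₁) ^ (vdeg deg (f * g)))⁻¹ * x ^ (vdeg deg (f * g)))
        = φ (f * g) * (((φ f₁) ^ (vdeg deg (f * g) % n))⁻¹ * x ^ (vdeg deg (f * g) % n)) := by
          rw [← hDwrap]
      _ = φ (f * g) * (((φ f₁) ^ ((vdeg deg f + vdeg deg g) % n))⁻¹
            * x ^ ((vdeg deg f + vdeg deg g) % n)) := by rw [vdeg_mul_mod]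
      _ = φ (f * g) * (((φ f₁) ^ (vdeg deg f + vdeg deg g))⁻¹
            * x ^ (vdeg deg f + vdeg deg g)) := by rw [hDwrap (vdeg deg f + vdeg deg g)]
      _ = φ f * φ g * (((φ g)⁻¹ * (((φ f₁) ^ (vdeg deg f))⁻¹ * x ^ (vdeg deg f)) * φ g)
            * (((φ f₁) ^ (vdeg deg g))⁻¹ * x ^ (vdeg deg g))) := by
          rw [map_mul, h2, pow_add, pow_add]
          group
      _ = (φ f * (((φ f₁) ^ (vdeg deg f))⁻¹ * x ^ (vdeg deg f)))
            * (φ g * (((φ f₁) ^ (vdeg deg g))⁻¹ * x ^ (vdeg deg g))) := by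
          group

private lemma buildHom_apply_ker (φ : F →* G) (x : G)
    (hf₁ : deg f₁ = Multiplicative.ofAdd (1 : ZMod n))
    (hxn : x ^ n = (φ f₁) ^ n) (hcore : (φ f₁)⁻¹ * x ∈ phiCore H deg φ)
    {f : F} (hf : deg f = 1) :
    buildHom H deg φ x hf₁ hxn hcore f = φ f := by
  have hv : vdeg deg f = 0 := by
    unfold vdeg
    rw [hf, toAdd_one, ZMod.val_zero]
  show φ f * (((φ f₁) ^ (vdeg deg f))⁻¹ * x ^ (vdeg deg f)) = φ f
  rw [hv]
  simp

private lemma buildHom_apply_f₁ (φ : F →* G) (x : G)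
    (hf₁ : deg f₁ = Multiplicative.ofAdd (1 : ZMod n))
    (hxn : x ^ n = (φ f₁) ^ n) (hcore : (φ f₁)⁻¹ * x ∈ phiCore H deg φ)
    (hn1 : 1 < n) :
    buildHom H deg φ x hf₁ hxn hcore f₁ = x := by
  haveI := Fact.mk hn1
  have hv : vdeg deg f₁ = 1 := by
    unfold vdeg
    rw [hf₁, toAdd_ofAdd, ZMod.val_one]
  show φ f₁ * (((φ f₁) ^ (vdeg deg f₁))⁻¹ * x ^ (vdeg deg f₁)) = x
  rw [hv]
  group

end core

section count

variable {F G : Type*} [Group F] [Group G] {n : ℕ} [NeZero n]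
variable (H : Subgroup G) (deg : F →* Multiplicative (ZMod n))

/-- `(φ f₁ * h) ^ n = (φ f₁) ^ n` for core elements `h`. -/
private lemma core_pow_eq [Finite G] {f₁ : F}
    (hf₁ : deg f₁ = Multiplicative.ofAdd (1 : ZMod n))
    (hHn : Nat.card H ∣ n) {φ : F →* G} {h : G} (hh : h ∈ phiCore H deg φ) :
    (φ f₁ * h) ^ n = (φ f₁) ^ n := by
  have hker : deg (f₁ ^ n) = 1 := by
    rw [map_pow, hf₁, ← ofAdd_nsmul]
    have : (n • (1 : ZMod n)) = 0 := by
      rw [nsmul_eq_mul, mul_one, ZMod.natCast_self]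
    rw [this, ofAdd_zero]
  refine coset_pow_eq_one (coreSubgroup H deg φ) ?_ ?_ ?_ ?_
    ((mem_coreSubgroup H deg).mpr hh)
  · intro t ht
    have h1 := core_conj_mem H deg ((mem_coreSubgroup H deg).mp ht) f₁⁻¹
    rw [map_inv, inv_inv] at h1
    exact (mem_coreSubgroup H deg).mpr h1
  · intro t ht
    exact (mem_coreSubgroup H deg).mpr
      (core_conj_mem H deg ((mem_coreSubgroup H deg).mp ht) f₁)
  · intro t ht
    have h1 := ((mem_coreSubgroup H deg).mp ht).2.2 _ hker
    rw [map_pow] at h1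
    have e2 : (φ f₁) ^ n * (((φ f₁) ^ n)⁻¹ * t * (φ f₁) ^ n) = t * (φ f₁) ^ n := by group
    rw [h1] at e2
    exact e2
  · refine dvd_trans (Subgroup.card_dvd_of_le ?_) hHn
    intro x hx
    exact ((mem_coreSubgroup H deg).mp hx).1

/-- the equivalence relation on homomorphisms -/
private def Rrel (f₁ : F) (φ ψ : F →* G) : Prop :=
  (∀ f, deg f = 1 → ψ f = φ f) ∧ (φ f₁)⁻¹ * ψ f₁ ∈ phiCore H deg φ

private lemma Rrel_refl (f₁ : F) (φ : F →* G) : Rrel H deg f₁ φ φ := by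
  refine ⟨fun _ _ => rfl, ?_⟩
  rw [inv_mul_cancel]
  exact (mem_coreSubgroup H deg).mp (coreSubgroup H deg φ).one_mem

private lemma Rrel_symm {f₁ : F} (hf₁ : deg f₁ = Multiplicative.ofAdd (1 : ZMod n))
    {φ ψ : F →* G} (hr : Rrel H deg f₁ φ ψ) : Rrel H deg f₁ ψ φ := by
  obtain ⟨ha, hb⟩ := hr
  refine ⟨fun f hf => (ha f hf).symm, ?_⟩
  have h2 : ((φ f₁)⁻¹ * ψ f₁)⁻¹ ∈ phiCore H deg φ :=
    (mem_coreSubgroup H deg).mp ((coreSubgroup H deg φ).inv_mem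
      ((mem_coreSubgroup H deg).mpr hb))
  have h3 := (core_eq_core H deg hf₁ ha hb) ▸ h2
  have e : ((φ f₁)⁻¹ * ψ f₁)⁻¹ = (ψ f₁)⁻¹ * φ f₁ := by group
  rwa [e] at h3

private lemma Rrel_trans {f₁ : F} (hf₁ : deg f₁ = Multiplicative.ofAdd (1 : ZMod n))
    {φ ψ χ : F →* G} (h1 : Rrel H deg f₁ φ ψ) (h2 : Rrel H deg f₁ ψ χ) :
    Rrel H deg f₁ φ χ := by
  refine ⟨fun f hf => (h2.1 f hf).trans (h1.1 f hf), ?_⟩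
  have h3 : (ψ f₁)⁻¹ * χ f₁ ∈ phiCore H deg φ :=
    (core_eq_core H deg hf₁ h1.1 h1.2) ▸ h2.2
  have h4 := mul_mem ((mem_coreSubgroup H deg).mpr h1.2) ((mem_coreSubgroup H deg).mpr h3)
  have e : ((φ f₁)⁻¹ * ψ f₁) * ((ψ f₁)⁻¹ * χ f₁) = (φ f₁)⁻¹ * χ f₁ := by group
  rw [e] at h4
  exact (mem_coreSubgroup H deg).mp h4

/-- conjugating a core element -/
private lemma conj_mem_core {φ : F →* G} {s : G} (hs : s ∈ H) {x : G}
    (hx : x ∈ phiCore H deg φ) :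
    s * x * s⁻¹ ∈ phiCore H deg ((MulAut.conj s).toMonoidHom.comp φ) := by
  obtain ⟨h1, h2, h3⟩ := hx
  have happ : ∀ f, ((MulAut.conj s).toMonoidHom.comp φ) f = s * φ f * s⁻¹ := fun f => rfl
  refine ⟨H.mul_mem (H.mul_mem hs h1) (H.inv_mem hs), fun f => ?_, fun f hf => ?_⟩
  · rw [happ]
    have e : (s * φ f * s⁻¹)⁻¹ * (s * x * s⁻¹) * (s * φ f * s⁻¹)
        = s * ((φ f)⁻¹ * x * φ f) * s⁻¹ := by group
    rw [e]
    exact H.mul_mem (H.mul_mem hs (h2 f)) (H.inv_mem hs)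
  · rw [happ]
    have e : (s * φ f * s⁻¹)⁻¹ * (s * x * s⁻¹) * (s * φ f * s⁻¹)
        = s * ((φ f)⁻¹ * x * φ f) * s⁻¹ := by group
    rw [e, h3 f hf]

/-- elements of `H` stabilizing the class of `φ` lie in the core of `φ`. -/
private lemma stab_mem_core {f₁ : F} (hf₁ : deg f₁ = Multiplicative.ofAdd (1 : ZMod n))
    {φ : F →* G} {s : G} (hs : s ∈ H)
    (hagree : ∀ f, deg f = 1 → s * φ f * s⁻¹ = φ f)
    (hh0 : (φ f₁)⁻¹ * (s * φ f₁ * s⁻¹) ∈ phiCore H deg φ) :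
    s ∈ phiCore H deg φ := by
  have hcomm : ∀ f, deg f = 1 → (φ f)⁻¹ * s * φ f = s := by
    intro f hf
    have h5 := hagree f hf
    have e : s * φ f = φ f * s := by
      calc s * φ f = (s * φ f * s⁻¹) * s := by group
        _ = φ f * s := by rw [h5]
    calc (φ f)⁻¹ * s * φ f = (φ f)⁻¹ * (s * φ f) := by group
      _ = (φ f)⁻¹ * (φ f * s) := by rw [e]
      _ = s := by group
  have hts : ∀ v : ℕ, ((φ f₁) ^ v)⁻¹ * s * (φ f₁) ^ v * s⁻¹ ∈ phiCore H deg φ := by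
    intro v
    induction v with
    | zero => simpa using (mem_coreSubgroup H deg).mp (coreSubgroup H deg φ).one_mem
    | succ v ih =>
      have e : ((φ f₁) ^ (v + 1))⁻¹ * s * (φ f₁) ^ (v + 1) * s⁻¹
          = ((φ f₁)⁻¹ * (((φ f₁) ^ v)⁻¹ * s * (φ f₁) ^ v * s⁻¹) * φ f₁)
            * ((φ f₁)⁻¹ * (s * φ f₁ * s⁻¹)) := by
        rw [pow_succ]; group
      rw [e]
      exact (mem_coreSubgroup H deg).mp (mul_mem
        ((mem_coreSubgroup H deg).mpr (core_conj_mem H deg ih f₁))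
        ((mem_coreSubgroup H deg).mpr hh0))
  refine ⟨hs, fun f => ?_, fun f hf => hcomm f hf⟩
  have h1 : φ f = φ (f * (f₁ ^ (vdeg deg f))⁻¹) * (φ f₁) ^ (vdeg deg f) := phi_decomp deg φ f
  have e : (φ f)⁻¹ * s * φ f = ((φ f₁) ^ (vdeg deg f))⁻¹
      * ((φ (f * (f₁ ^ (vdeg deg f))⁻¹))⁻¹ * s * φ (f * (f₁ ^ (vdeg deg f))⁻¹))
      * (φ f₁) ^ (vdeg deg f) := by
    conv_lhs => rw [h1]
    group
  rw [e, hcomm _ (deg_ker_decomp deg hf₁ f)]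
  have h6 := hts (vdeg deg f)
  have e2 : ((φ f₁) ^ (vdeg deg f))⁻¹ * s * (φ f₁) ^ (vdeg deg f)
      = (((φ f₁) ^ (vdeg deg f))⁻¹ * s * (φ f₁) ^ (vdeg deg f) * s⁻¹) * s := by group
  rw [e2]
  exact H.mul_mem h6.1 hs

end count

private def fiberSigmaEquiv {A B C : Type*} (f : A → B) (g : B → C) (c : C) :
    {a : A // g (f a) = c} ≃ Σ b : {b : B // g b = c}, {a : A // f a = b.1} where
  toFun a := ⟨⟨f a.1, a.2⟩, ⟨a.1, rfl⟩⟩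
  invFun x := ⟨x.2.1, by rw [x.2.2]; exact x.1.2⟩
  left_inv a := rfl
  right_inv := by
    rintro ⟨⟨b, hb⟩, ⟨a, ha⟩⟩
    cases ha
    rfl

private lemma nat_card_sigma {ι : Type*} [Fintype ι] (f : ι → Type*) [∀ i, Finite (f i)] :
    Nat.card (Σ i, f i) = ∑ i, Nat.card (f i) := by
  letI : ∀ i, Fintype (f i) := fun i => Fintype.ofFinite _
  simp [Nat.card_eq_fintype_card]

theorem stmt_14 {G : Type*} [Group G] [Fintype G] (H : Subgroup G) (n : ℕ) (hn : 0 < n)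
    (hHn : Nat.card H ∣ n) {F : Type*} [Group F]
    (deg : F →* Multiplicative (ZMod n)) (hdeg : Function.Surjective deg)
    (Φ : Set (F →* G))
    (hI : ∀ φ ∈ Φ, ∀ h ∈ H, ((MulAut.conj h⁻¹).toMonoidHom.comp φ) ∈ Φ)
    (hII : ∀ φ ∈ Φ, ∀ h ∈ phiCore H deg φ, ∀ f₁ : F,
      deg f₁ = Multiplicative.ofAdd (1 : ZMod n) → ∀ ψ : F →* G,
      (∀ f : F, deg f = 1 → ψ f = φ f) → ψ f₁ = φ f₁ * h → ψ ∈ Φ) :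
    Nat.card H ∣ Nat.card Φ := by
  classical
  rcases eq_or_ne (Nat.card H) 1 with hH1 | hH1
  · rw [hH1]; exact one_dvd _
  have hHpos : 0 < Nat.card H := Nat.card_pos
  have hn2 : 1 < n := by
    have h2 := Nat.le_of_dvd hn hHn
    omega
  haveI : NeZero n := ⟨by omega⟩
  cases finite_or_infinite (↥Φ)
  case inr =>
    have h0 : Nat.card Φ = 0 := Nat.card_eq_zero_of_infinite
    rw [h0]
    exact dvd_zero _
  obtain ⟨f₁, hf₁⟩ := hdeg (Multiplicative.ofAdd (1 : ZMod n))
  -- the conjugation action of H on Φ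
  let act : ↥H → ↥Φ → ↥Φ := fun s φ =>
    ⟨(MulAut.conj (s : G)).toMonoidHom.comp φ.1, by
      have h3 := hI φ.1 φ.2 ((s : G)⁻¹) (H.inv_mem s.2)
      rwa [inv_inv] at h3⟩
  have act_apply : ∀ (s : ↥H) (φ : ↥Φ) (f : F),
      (act s φ).1 f = (s : G) * φ.1 f * (s : G)⁻¹ := fun s φ f => rfl
  have act_one : ∀ φ : ↥Φ, act 1 φ = φ := by
    intro φ
    apply Subtype.ext; apply MonoidHom.ext; intro f
    rw [act_apply]
    simp
  have act_mul : ∀ (s t : ↥H) (φ : ↥Φ), act (s * t) φ = act s (act t φ) := by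
    intro s t φ
    apply Subtype.ext; apply MonoidHom.ext; intro f
    rw [act_apply, act_apply, act_apply]
    push_cast
    group
  have act_cancel : ∀ (s : ↥H) (φ : ↥Φ), act s⁻¹ (act s φ) = φ := by
    intro s φ
    rw [← act_mul, inv_mul_cancel, act_one]
  -- the setoid
  let sΦ : Setoid ↥Φ :=
    { r := fun φ ψ => Rrel H deg f₁ φ.1 ψ.1
      iseqv := ⟨fun φ => Rrel_refl H deg f₁ φ.1,
        fun h => Rrel_symm H deg hf₁ h,
        fun h1 h2 => Rrel_trans H deg hf₁ h1 h2⟩ }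
  have hRconj : ∀ (s : ↥H) (φ ψ : ↥Φ), sΦ.r φ ψ → sΦ.r (act s φ) (act s ψ) := by
    rintro s φ ψ ⟨ha, hb⟩
    constructor
    · intro f hf
      rw [act_apply, act_apply, ha f hf]
    · have e : ((act s φ).1 f₁)⁻¹ * (act s ψ).1 f₁
          = (s : G) * ((φ.1 f₁)⁻¹ * ψ.1 f₁) * (s : G)⁻¹ := by
        rw [act_apply, act_apply]; group
      rw [e]
      exact conj_mem_core H deg s.2 hb
  let Q1 := Quotient sΦ
  let qmap : ↥H → Q1 → Q1 := fun s =>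
    Quotient.lift (fun φ => Quotient.mk sΦ (act s φ))
      (fun φ ψ h => Quotient.sound (hRconj s φ ψ h))
  have qmap_mk : ∀ (s : ↥H) (φ : ↥Φ), qmap s (Quotient.mk sΦ φ) = Quotient.mk sΦ (act s φ) :=
    fun s φ => rfl
  have qmap_one : ∀ q : Q1, qmap 1 q = q := by
    intro q
    induction q using Quotient.ind
    rw [qmap_mk, act_one]
  have qmap_mul : ∀ (s t : ↥H) (q : Q1), qmap (s * t) q = qmap s (qmap t q) := by
    intro s t q
    induction q using Quotient.ind
    rw [qmap_mk, qmap_mk, qmap_mk, act_mul]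
  -- the orbit setoid on Q1
  let oS : Setoid Q1 :=
    { r := fun q q' => ∃ s : ↥H, qmap s q' = q
      iseqv := by
        refine ⟨fun q => ⟨1, qmap_one q⟩, ?_, ?_⟩
        · rintro q q' ⟨s, rfl⟩
          exact ⟨s⁻¹, by rw [← qmap_mul, inv_mul_cancel, qmap_one]⟩
        · rintro q q' q'' ⟨s, rfl⟩ ⟨t, rfl⟩
          exact ⟨s * t, qmap_mul s t q''⟩ }
  let Q2 := Quotient oS
  let proj : ↥Φ → Q2 := fun φ => Quotient.mk oS (Quotient.mk sΦ φ)
  -- global decomposition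
  letI : Fintype Q2 := Fintype.ofFinite _
  have hsplit : Nat.card ↥Φ = ∑ o : Q2, Nat.card {φ : ↥Φ // proj φ = o} := by
    rw [← nat_card_sigma]
    exact (Nat.card_congr (Equiv.sigmaFiberEquiv proj)).symm
  have hgoal : Nat.card H ∣ Nat.card ↥Φ := by
    rw [hsplit]
    refine Finset.dvd_sum ?_
    intro o _
    -- representatives
    let q₀ : Q1 := o.out
    let φ₀ : ↥Φ := q₀.out
    have hq₀ : Quotient.mk oS q₀ = o := Quotient.out_eq o
    have hφ₀ : Quotient.mk sΦ φ₀ = q₀ := Quotient.out_eq q₀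
    have act_cancel2 : ∀ (s : ↥H) (φ : ↥Φ), act s (act s⁻¹ φ) = φ := by
      intro s φ
      rw [← act_mul, mul_inv_cancel, act_one]
    -- the stabilizer subgroup of the class of φ₀
    let St : Subgroup ↥H :=
      { carrier := {s : ↥H | sΦ.r (act s φ₀) φ₀}
        one_mem' := by
          show sΦ.r (act 1 φ₀) φ₀
          rw [act_one]
        mul_mem' := by
          intro s t hs ht
          show sΦ.r (act (s * t) φ₀) φ₀
          rw [act_mul]
          exact sΦ.iseqv.trans (hRconj s _ _ ht) hs
        inv_mem' := by
          intro s hs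
          show sΦ.r (act s⁻¹ φ₀) φ₀
          have h4 := hRconj s⁻¹ _ _ hs
          rw [act_cancel] at h4
          exact sΦ.iseqv.symm h4 }
    have hStmem : ∀ s : ↥H, s ∈ St ↔ sΦ.r (act s φ₀) φ₀ := fun s => Iff.rfl
    -- the class of φ₀ is in bijection with the core of φ₀
    have hcore_of_r : ∀ ψ : ↥Φ, sΦ.r ψ φ₀ → (φ₀.1 f₁)⁻¹ * ψ.1 f₁ ∈ phiCore H deg φ₀.1 :=
      fun ψ hr => (Rrel_symm H deg hf₁ hr).2
    let bh : ↥(coreSubgroup H deg φ₀.1) → F →* G := fun h =>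
      buildHom H deg φ₀.1 (φ₀.1 f₁ * h.1) hf₁
        (core_pow_eq H deg hf₁ hHn ((mem_coreSubgroup H deg).mp h.2))
        (by rw [inv_mul_cancel_left]; exact (mem_coreSubgroup H deg).mp h.2)
    have bh_ker : ∀ (h) (f : F), deg f = 1 → bh h f = φ₀.1 f := fun h f hf =>
      buildHom_apply_ker H deg _ _ hf₁ _ _ hf
    have bh_f₁ : ∀ h, bh h f₁ = φ₀.1 f₁ * h.1 := fun h =>
      buildHom_apply_f₁ H deg _ _ hf₁ _ _ hn2
    have bh_mem : ∀ h, bh h ∈ Φ := fun h =>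
      hII φ₀.1 φ₀.2 h.1 ((mem_coreSubgroup H deg).mp h.2) f₁ hf₁ (bh h) (bh_ker h) (bh_f₁ h)
    have bh_rel : ∀ h, sΦ.r ⟨bh h, bh_mem h⟩ φ₀ := by
      intro h
      have hfwd : Rrel H deg f₁ φ₀.1 (bh h) := by
        refine ⟨fun f hf => bh_ker h f hf, ?_⟩
        rw [bh_f₁, inv_mul_cancel_left]
        exact (mem_coreSubgroup H deg).mp h.2
      exact Rrel_symm H deg hf₁ hfwd
    let classEquiv : {ψ : ↥Φ // sΦ.r ψ φ₀} ≃ ↥(coreSubgroup H deg φ₀.1) :=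
      { toFun := fun ψ => ⟨(φ₀.1 f₁)⁻¹ * ψ.1.1 f₁,
          (mem_coreSubgroup H deg).mpr (hcore_of_r ψ.1 ψ.2)⟩
        invFun := fun h => ⟨⟨bh h, bh_mem h⟩, bh_rel h⟩
        left_inv := by
          rintro ⟨ψ, hψ⟩
          apply Subtype.ext
          apply Subtype.ext
          show bh _ = ψ.1
          apply hom_determined deg hf₁
          · intro f hf
            rw [bh_ker _ f hf]
            exact hψ.1 f hf
          · rw [bh_f₁]
            exact mul_inv_cancel_left _ _
        right_inv := by
          intro h
          apply Subtype.ext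
          show (φ₀.1 f₁)⁻¹ * (bh h) f₁ = h.1
          rw [bh_f₁, inv_mul_cancel_left] }
    -- each class in the orbit has the same size
    have hclass : ∀ q : Q1, Quotient.mk oS q = o →
        Nat.card {φ : ↥Φ // Quotient.mk sΦ φ = q}
          = Nat.card (coreSubgroup H deg φ₀.1) := by
      intro q hq
      have hr : oS.r q q₀ := Quotient.exact (hq.trans hq₀.symm)
      obtain ⟨s, hs⟩ := hr
      let e2 : {φ : ↥Φ // Quotient.mk sΦ φ = q} ≃ {φ : ↥Φ // Quotient.mk sΦ φ = q₀} :=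
        { toFun := fun φ => ⟨act s⁻¹ φ.1, by
            rw [show Quotient.mk sΦ (act s⁻¹ φ.1) = qmap s⁻¹ (Quotient.mk sΦ φ.1) from rfl,
              φ.2, ← hs, ← qmap_mul, inv_mul_cancel, qmap_one]⟩
          invFun := fun φ => ⟨act s φ.1, by
            rw [show Quotient.mk sΦ (act s φ.1) = qmap s (Quotient.mk sΦ φ.1) from rfl,
              φ.2, hs]⟩
          left_inv := fun φ => Subtype.ext (act_cancel2 s φ.1)
          right_inv := fun φ => Subtype.ext (act_cancel s φ.1) }
      let e3 : {φ : ↥Φ // Quotient.mk sΦ φ = q₀} ≃ {ψ : ↥Φ // sΦ.r ψ φ₀} :=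
        Equiv.subtypeEquivRight (fun φ => by
          rw [← hφ₀]
          exact ⟨fun hh => Quotient.exact hh, fun hh => Quotient.sound hh⟩)
      rw [Nat.card_congr ((e2.trans e3).trans classEquiv)]
    -- the orbit is in bijection with H ⧸ St
    have hqmap_fix : ∀ u : ↥H, u ∈ St → qmap u q₀ = q₀ := by
      intro u hu
      rw [← hφ₀, qmap_mk]
      exact Quotient.sound hu
    let orbMap : (↥H ⧸ St) → {q : Q1 // Quotient.mk oS q = o} := fun c =>
      Quotient.liftOn' c
        (fun s => (⟨qmap s q₀,
          (Quotient.sound (show oS.r (qmap s q₀) q₀ from ⟨s, rfl⟩)).trans hq₀⟩ :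
          {q : Q1 // Quotient.mk oS q = o}))
        (by
          intro s t hst
          have h5 : s⁻¹ * t ∈ St := QuotientGroup.leftRel_apply.mp hst
          apply Subtype.ext
          show qmap s q₀ = qmap t q₀
          calc qmap s q₀ = qmap s (qmap (s⁻¹ * t) q₀) := by rw [hqmap_fix _ h5]
            _ = qmap (s * (s⁻¹ * t)) q₀ := (qmap_mul _ _ _).symm
            _ = qmap t q₀ := by rw [mul_inv_cancel_left])
    have horbBij : Function.Bijective orbMap := by
      constructor
      · intro c c'
        induction c using QuotientGroup.induction_on
        induction c' using QuotientGroup.induction_on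
        rename_i s t
        intro hEq
        have h6 : qmap s q₀ = qmap t q₀ := congrArg Subtype.val hEq
        have h7 : qmap (t⁻¹ * s) q₀ = q₀ := by
          rw [qmap_mul, h6, ← qmap_mul, inv_mul_cancel, qmap_one]
        have h8 : sΦ.r (act (t⁻¹ * s) φ₀) φ₀ := by
          apply Quotient.exact (s := sΦ)
          calc Quotient.mk sΦ (act (t⁻¹ * s) φ₀)
              = qmap (t⁻¹ * s) (Quotient.mk sΦ φ₀) := rfl
            _ = qmap (t⁻¹ * s) q₀ := by rw [hφ₀]
            _ = q₀ := h7
            _ = Quotient.mk sΦ φ₀ := hφ₀.symm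
        apply (QuotientGroup.eq (s := St)).mpr
        have h9 := St.inv_mem ((hStmem _).mpr h8)
        rwa [mul_inv_rev, inv_inv] at h9
      · intro q
        obtain ⟨s, hs⟩ : oS.r q.1 q₀ := Quotient.exact (q.2.trans hq₀.symm)
        exact ⟨QuotientGroup.mk s, Subtype.ext hs⟩
    have horb : Nat.card {q : Q1 // Quotient.mk oS q = o} = Nat.card (↥H ⧸ St) :=
      (Nat.card_congr (Equiv.ofBijective orbMap horbBij)).symm
    -- the stabilizer embeds in the core
    have hstab : Nat.card St ∣ Nat.card (coreSubgroup H deg φ₀.1) := by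
      have hle : Subgroup.map H.subtype St ≤ coreSubgroup H deg φ₀.1 := by
        rintro x ⟨s, hsSt, rfl⟩
        have hr := Rrel_symm H deg hf₁ ((hStmem s).mp hsSt)
        exact (mem_coreSubgroup H deg).mpr (stab_mem_core H deg hf₁ s.2
          (fun f hf => hr.1 f hf) hr.2)
      calc Nat.card St = Nat.card (Subgroup.map H.subtype St) :=
            Nat.card_congr (Subgroup.equivMapOfInjective St H.subtype
              H.subtype_injective).toEquiv
        _ ∣ Nat.card (coreSubgroup H deg φ₀.1) := Subgroup.card_dvd_of_le hle
    -- assemble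
    letI : Fintype {q : Q1 // Quotient.mk oS q = o} := Fintype.ofFinite _
    have hfib : Nat.card {φ : ↥Φ // proj φ = o}
        = Nat.card {q : Q1 // Quotient.mk oS q = o} * Nat.card (coreSubgroup H deg φ₀.1) := by
      have e1 := Nat.card_congr
        (fiberSigmaEquiv (fun φ : ↥Φ => Quotient.mk sΦ φ) (fun q => Quotient.mk oS q) o)
      rw [e1, nat_card_sigma, Finset.sum_congr rfl (fun q _ => hclass q.1 q.2),
        Finset.sum_const, smul_eq_mul, Finset.card_univ, ← Nat.card_eq_fintype_card]
    rw [hfib, horb]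
    obtain ⟨t, ht⟩ := hstab
    rw [ht, Subgroup.card_eq_card_quotient_mul_card_subgroup St]
    exact ⟨t, by ring⟩

  exact hgoal
end

section
/- Let G be a finite group and n a positive integer. Define gcd(G, n) as the least common multiple of the orders of subgroups of G whose order divides n. Then gcd(G, n) = gcd(|G|, n). -/
theorem stmt_15 (G : Type*) [Group G] [Fintype G] (n : ℕ) (hn : 0 < n) (d : ℕ)
    (hd₁ : ∀ H : Subgroup G, Nat.card H ∣ n → Nat.card H ∣ d)
    (hd₂ : ∀ e : ℕ, (∀ H : Subgroup G, Nat.card H ∣ n → Nat.card H ∣ e) → d ∣ e) :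
    d = Nat.gcd (Fintype.card G) n := by
  set g := Nat.gcd (Fintype.card G) n with hg
  have hgpos : 0 < g := Nat.gcd_pos_of_pos_right _ hn
  have hdg : d ∣ g := by
    apply hd₂
    intro H hH
    exact Nat.dvd_gcd (by
      have := Subgroup.card_subgroup_dvd_card H
      simpa [Nat.card_eq_fintype_card] using this) hH
  have hdpos : 0 < d := Nat.pos_of_dvd_of_pos hdg hgpos
  have hgd : g ∣ d := by
    rw [← Nat.factorization_le_iff_dvd hgpos.ne' hdpos.ne']
    intro p
    by_cases hp : p.Prime
    · have hk : p ^ g.factorization p ∣ g := Nat.ordProj_dvd g p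
      have hkG : p ^ g.factorization p ∣ Fintype.card G :=
        hk.trans (Nat.gcd_dvd_left _ _)
      have hkn : p ^ g.factorization p ∣ n := hk.trans (Nat.gcd_dvd_right _ _)
      haveI : Fact p.Prime := ⟨hp⟩
      obtain ⟨H, hcard⟩ := Sylow.exists_subgroup_card_pow_prime (G := G) p
        (by simpa [Nat.card_eq_fintype_card] using hkG)
      have : (p : ℕ) ^ g.factorization p ∣ d := by
        rw [← hcard]; exact hd₁ H (by rw [hcard]; exact hkn)
      simpa [Nat.Prime.pow_dvd_iff_le_factorization hp hdpos.ne'] using this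
    · simp [Nat.factorization_eq_zero_of_not_prime _ hp]
  exact Nat.dvd_antisymm hdg hgd
end

section
/- Let G be a finite group and A a subgroup. The number of homomorphisms φ from Z × Z to G with φ(W) ⊆ A, where W = Z × {0}, equals the number of pairs (a, g) with a ∈ A, g ∈ G, ag = ga; this count is divisible by |A|. -/
open Fintype

theorem stmt_17 (G : Type*) [Group G] [Fintype G] (A : Subgroup G) :
    Nat.card A ∣ Nat.card {p : A × G // (p.1 : G) * p.2 = p.2 * (p.1 : G)} := by
  classical
  set A' : Subgroup (ConjAct G) := A.map (ConjAct.toConjAct (G := G)).toMonoidHom with hA'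
  let e : A ≃* A' := (ConjAct.toConjAct (G := G)).subgroupMap A
  simp only [Nat.card_eq_fintype_card]
  rw [card_congr (Equiv.subtypeProdEquivSigmaSubtype
      (fun (a : A) (g : G) => (a : G) * g = g * (a : G))), card_sigma]
  have hsum : (∑ i : A, card {b : G // (i : G) * b = b * (i : G)})
      = ∑ a : A', card (MulAction.fixedBy G a) := by
    refine Fintype.sum_equiv e.toEquiv _ _ fun a => ?_
    refine Fintype.card_congr (Equiv.subtypeEquivRight fun b => ?_)
    have h1 : ((e.toEquiv a : A') : ConjAct G) = ConjAct.toConjAct (a : G) :=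
      MulEquiv.coe_subgroupMap_apply _ _ _
    have h2 : (e.toEquiv a) • b = ConjAct.toConjAct (a : G) • b := by
      rw [Subgroup.smul_def, h1]
    simp only [MulAction.mem_fixedBy, h2, ConjAct.toConjAct_smul]
    exact mul_inv_eq_iff_eq_mul.symm
  rw [hsum, MulAction.sum_card_fixedBy_eq_card_orbits_mul_card_group A' G,
    card_congr e.toEquiv]
  exact dvd_mul_left _ _
end

section
/- Let G be a finite group and n a positive integer. The number of n-tuples (g_1, …, g_n) ∈ G^n that generate G is divisible by |G'|, the order of the commutator subgroup of G. -/
open Subgroup Set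

section FreeAction

lemma card_dvd_of_free_action {A X : Type*} [Group A] [Finite A] [Finite X] [MulAction A X]
    (h : ∀ (a : A) (x : X), a • x = x → a = 1) : Nat.card A ∣ Nat.card X := by
  classical
  have e := MulAction.selfEquivSigmaOrbits A X
  rw [Nat.card_congr e]
  haveI : Fintype X := Fintype.ofFinite X
  haveI : Fintype (MulAction.orbitRel.Quotient A X) := Fintype.ofFinite _
  haveI : ∀ ω : MulAction.orbitRel.Quotient A X, Fintype (MulAction.orbit A ω.out) :=
    fun ω => Fintype.ofFinite _
  have hcard : ∀ ω : MulAction.orbitRel.Quotient A X,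
      Nat.card (MulAction.orbit A ω.out) = Nat.card A := by
    intro ω
    rw [Nat.card_congr (MulAction.orbitEquivQuotientStabilizer A ω.out)]
    have hs : MulAction.stabilizer A ω.out = ⊥ := by
      ext a
      simp only [MulAction.mem_stabilizer_iff, Subgroup.mem_bot]
      exact ⟨fun ha => h a _ ha, fun ha => by rw [ha, one_smul]⟩
    rw [hs, Nat.card_congr QuotientGroup.quotientBot.toEquiv]
  have hsum : Nat.card ((ω : MulAction.orbitRel.Quotient A X) × MulAction.orbit A ω.out)
      = ∑ ω : MulAction.orbitRel.Quotient A X, Nat.card (MulAction.orbit A ω.out) := by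
    rw [Nat.card_eq_fintype_card, Fintype.card_sigma]
    exact Finset.sum_congr rfl fun ω _ => (Nat.card_eq_fintype_card).symm
  rw [hsum]
  exact Finset.dvd_sum fun ω _ => (hcard ω).symm ▸ dvd_refl _

end FreeAction

section Fibers

variable {G : Type*} [Group G] {Q : Type*} [Group Q]

/-- lifts of `f` along `π` with range inside `H` -/
def lif (π : G →* Q) (n : ℕ) (f : Fin n → Q) (H : Subgroup G) : Type _ :=
  {g : Fin n → G // ⇑π ∘ g = f ∧ range g ⊆ (H : Set G)}

/-- lifts of `f` along `π` generating exactly `H` -/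
def fib (π : G →* Q) (n : ℕ) (f : Fin n → Q) (H : Subgroup G) : Type _ :=
  {g : Fin n → G // ⇑π ∘ g = f ∧ closure (range g) = H}

lemma lif_card_sum [Finite G] (π : G →* Q) (n : ℕ) (f : Fin n → Q) (H : Subgroup G) :
    Nat.card (lif π n f H) = ∑ᶠ K : {K : Subgroup G // K ≤ H}, Nat.card (fib π n f K.1) := by
  classical
  haveI : Finite (Subgroup G) := Finite.of_injective _ SetLike.coe_injective
  haveI : Fintype {K : Subgroup G // K ≤ H} := Fintype.ofFinite _
  haveI : Finite (lif π n f H) := Subtype.finite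
  let cmap : lif π n f H → {K : Subgroup G // K ≤ H} :=
    fun x => ⟨closure (range x.1), (closure_le _).2 x.2.2⟩
  have e1 : lif π n f H ≃ Σ K : {K : Subgroup G // K ≤ H}, {x : lif π n f H // cmap x = K} :=
    (Equiv.sigmaFiberEquiv cmap).symm
  have e2 : ∀ K : {K : Subgroup G // K ≤ H}, {x : lif π n f H // cmap x = K} ≃ fib π n f K.1 := by
    intro K
    refine ⟨fun x => ⟨x.1.1, x.1.2.1, ?_⟩,
            fun g => ⟨⟨g.1, g.2.1, ?_⟩, ?_⟩, ?_, ?_⟩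
    · exact congrArg Subtype.val x.2
    · exact fun y hy => K.2 (g.2.2 ▸ subset_closure hy)
    · exact Subtype.ext g.2.2
    · intro x; apply Subtype.ext; apply Subtype.ext; rfl
    · intro g; apply Subtype.ext; rfl
  rw [Nat.card_congr e1]
  rw [finsum_eq_sum_of_fintype]
  haveI : ∀ K : {K : Subgroup G // K ≤ H}, Fintype {x : lif π n f H // cmap x = K} :=
    fun K => Fintype.ofFinite _
  rw [Nat.card_eq_fintype_card, Fintype.card_sigma]
  exact Finset.sum_congr rfl fun K _ => by
    rw [← Nat.card_eq_fintype_card, Nat.card_congr (e2 K)]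

lemma lif_card_eq (π : G →* Q) (n : ℕ) {f₁ f₂ : Fin n → Q}
    (h₁ : closure (range f₁) = ⊤) (h₂ : closure (range f₂) = ⊤) (H : Subgroup G) :
    Nat.card (lif π n f₁ H) = Nat.card (lif π n f₂ H) := by
  classical
  by_cases hH : Subgroup.map π H = ⊤
  · have ex : ∀ (f : Fin n → Q) (i : Fin n), ∃ t : G, t ∈ H ∧ π t = f i := by
      intro f i
      have : f i ∈ Subgroup.map π H := hH ▸ Subgroup.mem_top _
      rcases this with ⟨t, ht, hπt⟩
      exact ⟨t, ht, hπt⟩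
    choose t ht hπt using ex f₁
    choose s hs hπs using ex f₂
    apply Nat.card_congr
    refine ⟨fun g => ⟨fun i => g.1 i * (t i)⁻¹ * s i, ?_, ?_⟩,
            fun g => ⟨fun i => g.1 i * (s i)⁻¹ * t i, ?_, ?_⟩, ?_, ?_⟩
    · funext i
      have hgi := congrFun g.2.1 i
      simp only [Function.comp_apply] at hgi ⊢
      rw [map_mul, map_mul, map_inv, hgi, hπt, hπs]
      group
    · rintro x ⟨i, rfl⟩
      exact mul_mem (mul_mem (g.2.2 ⟨i, rfl⟩) (inv_mem (ht i))) (hs i)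
    · funext i
      have hgi := congrFun g.2.1 i
      simp only [Function.comp_apply] at hgi ⊢
      rw [map_mul, map_mul, map_inv, hgi, hπt, hπs]
      group
    · rintro x ⟨i, rfl⟩
      exact mul_mem (mul_mem (g.2.2 ⟨i, rfl⟩) (inv_mem (hs i))) (ht i)
    · intro g
      apply Subtype.ext
      funext i
      simp only
      group
    · intro g
      apply Subtype.ext
      funext i
      simp only
      group
  · have empty : ∀ (f : Fin n → Q), closure (range f) = ⊤ → IsEmpty (lif π n f H) := by
      intro f hf
      constructor
      rintro ⟨g, hg, hr⟩
      apply hH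
      have hle : Subgroup.map π (closure (range g)) ≤ Subgroup.map π H :=
        Subgroup.map_mono ((closure_le _).2 hr)
      rw [MonoidHom.map_closure, ← Set.range_comp, hg, hf] at hle
      exact top_le_iff.1 hle
    haveI := empty f₁ h₁
    haveI := empty f₂ h₂
    rw [Nat.card_of_isEmpty, Nat.card_of_isEmpty]

lemma subgroup_card_lt [Finite G] {K H : Subgroup G} (hKH : K ≤ H) (hne : K ≠ H) :
    Nat.card K < Nat.card H := by
  have hss : (K : Set G) ⊂ (H : Set G) :=
    ⟨hKH, fun h => hne (le_antisymm hKH fun x hx => h hx)⟩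
  have := Set.ncard_lt_ncard hss (Set.toFinite _)
  rw [← Nat.card_coe_set_eq, ← Nat.card_coe_set_eq] at this
  exact this

lemma fib_card_eq [Finite G] (π : G →* Q) (n : ℕ) {f₁ f₂ : Fin n → Q}
    (h₁ : closure (range f₁) = ⊤) (h₂ : closure (range f₂) = ⊤) (H : Subgroup G) :
    Nat.card (fib π n f₁ H) = Nat.card (fib π n f₂ H) := by
  classical
  haveI : Finite (Subgroup G) := Finite.of_injective _ SetLike.coe_injective
  suffices h : ∀ (m : ℕ) (H : Subgroup G), Nat.card H ≤ m →
      Nat.card (fib π n f₁ H) = Nat.card (fib π n f₂ H) from h _ H le_rfl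
  intro m
  induction m with
  | zero =>
    intro H hH
    exact absurd (lt_of_lt_of_le Nat.card_pos hH) (by simp)
  | succ m ih =>
    intro H hH
    haveI : Fintype {K : Subgroup G // K ≤ H} := Fintype.ofFinite _
    have key₁ := lif_card_sum π n f₁ H
    have key₂ := lif_card_sum π n f₂ H
    rw [finsum_eq_sum_of_fintype] at key₁ key₂
    set a : {K : Subgroup G // K ≤ H} := ⟨H, le_rfl⟩ with ha
    rw [← Finset.add_sum_erase Finset.univ _ (Finset.mem_univ a)] at key₁ key₂
    have hsum : ∑ K ∈ Finset.univ.erase a, Nat.card (fib π n f₁ K.1)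
        = ∑ K ∈ Finset.univ.erase a, Nat.card (fib π n f₂ K.1) := by
      apply Finset.sum_congr rfl
      intro K hK
      have hne : K.1 ≠ H := fun h => (Finset.mem_erase.1 hK).1 (Subtype.ext h)
      have hlt : Nat.card K.1 < Nat.card H := subgroup_card_lt K.2 hne
      exact ih K.1 (Nat.lt_succ_iff.1 (lt_of_lt_of_le hlt hH))
    have hl := lif_card_eq π n h₁ h₂ H
    rw [key₁, key₂, hsum] at hl
    exact Nat.add_right_cancel hl

end Fibers

section Central

variable {G : Type*} [Group G]

open scoped commutatorElement

lemma commutator_central_eq (h k a b : G) (ha : a ∈ Subgroup.center G)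
    (hb : b ∈ Subgroup.center G) : ⁅h*a, k*b⁆ = ⁅h, k⁆ := by
  have ca : ∀ x : G, a * x = x * a := fun x => ((Subgroup.mem_center_iff.1 ha) x).symm
  have cb : ∀ x : G, b * x = x * b := fun x => ((Subgroup.mem_center_iff.1 hb) x).symm
  have e1 : h*a*(k*b)*(h*a)⁻¹*(k*b)⁻¹ = h * (a * (k*b) * a⁻¹) * h⁻¹ * (b⁻¹ * k⁻¹) := by group
  rw [commutatorElement_def, commutatorElement_def, e1,
      show a*(k*b)*a⁻¹ = k*b by rw [ca (k*b)]; group,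
      show h*(k*b)*h⁻¹*(b⁻¹*k⁻¹) = h*k*(b*h⁻¹*b⁻¹)*k⁻¹ by group,
      show b*h⁻¹*b⁻¹ = h⁻¹ by rw [cb h⁻¹]; group]

lemma commutator_le_of_sup_central {H A : Subgroup G} [A.Normal] (hA : A ≤ Subgroup.center G)
    (h : H ⊔ A = ⊤) : commutator G ≤ H := by
  rw [commutator_def, Subgroup.commutator_le]
  intro g₁ _ g₂ _
  have hd : ∀ g : G, ∃ x a : G, x ∈ H ∧ a ∈ A ∧ g = x * a := by
    intro g
    have : g ∈ (↑(H ⊔ A) : Set G) := by rw [h]; trivial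
    rw [Subgroup.mul_normal] at this
    rcases this with ⟨x, hx, a, haa, hxa⟩
    exact ⟨x, a, hx, haa, hxa.symm⟩
  obtain ⟨x₁, a₁, hx₁, ha₁, rfl⟩ := hd g₁
  obtain ⟨x₂, a₂, hx₂, ha₂, rfl⟩ := hd g₂
  rw [commutator_central_eq x₁ x₂ a₁ a₂ (hA ha₁) (hA ha₂), commutatorElement_def]
  exact mul_mem (mul_mem (mul_mem hx₁ hx₂) (inv_mem hx₁)) (inv_mem hx₂)

lemma dvd_fib_central [Finite G] {A : Subgroup G} [A.Normal] (hA : A ≤ commutator G)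
    (hAc : A ≤ Subgroup.center G) {n : ℕ} (hn : 0 < n) (f : Fin n → G ⧸ A) :
    Nat.card A ∣ Nat.card (fib (QuotientGroup.mk' A) n f ⊤) := by
  classical
  set π := QuotientGroup.mk' A with hπ
  haveI : Finite (fib π n f ⊤) := Subtype.finite
  set i0 : Fin n := ⟨0, hn⟩ with hi0
  have hmem : ∀ (a : A) (g : fib π n f ⊤),
      (⇑π ∘ (fun i => if i = i0 then (a : G) * g.1 i else g.1 i) = f ∧
       closure (range (fun i => if i = i0 then (a : G) * g.1 i else g.1 i)) = ⊤) := by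
    intro a g
    set g' : Fin n → G := fun i => if i = i0 then (a : G) * g.1 i else g.1 i with hg'
    constructor
    · funext i
      by_cases h : i = i0
      · simp only [hg', Function.comp_apply, h, if_pos]
        rw [map_mul]
        have h1 : π (a : G) = 1 := (QuotientGroup.eq_one_iff _).2 a.2
        rw [h1, one_mul]
        exact congrFun g.2.1 i0
      · simp only [hg', Function.comp_apply, h, if_neg, not_false_iff]
        exact congrFun g.2.1 i
    · have hsup : closure (range g') ⊔ A = ⊤ := by
        rw [eq_top_iff, ← g.2.2]
        rw [closure_le]
        intro x hx
        rcases hx with ⟨i, rfl⟩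
        by_cases h : i = i0
        · have hgi : g' i = (a : G) * g.1 i := by simp only [hg', if_pos h]
          have hgi2 : g.1 i = (a : G)⁻¹ * g' i := by rw [hgi]; group
          rw [hgi2]
          exact mul_mem (le_sup_right (α := Subgroup G) (inv_mem a.2))
            (le_sup_left (α := Subgroup G) (subset_closure (mem_range_self i)))
        · have hgi : g' i = g.1 i := by simp only [hg', if_neg h]
          rw [← hgi]
          exact le_sup_left (α := Subgroup G) (subset_closure (mem_range_self i))
      have h1 : A ≤ closure (range g') :=
        le_trans hA (commutator_le_of_sup_central hAc hsup)
      rw [← hsup, sup_eq_left.2 h1]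
  letI : MulAction A (fib π n f ⊤) :=
    { smul := fun a g => ⟨fun i => if i = i0 then (a : G) * g.1 i else g.1 i, hmem a g⟩
      one_smul := fun g => by
        apply Subtype.ext
        show (fun i => if i = i0 then ((1 : A) : G) * g.1 i else g.1 i) = g.1
        funext i
        by_cases h : i = i0 <;> simp [h]
      mul_smul := fun a b g => by
        apply Subtype.ext
        show (fun i => if i = i0 then ((a * b : A) : G) * g.1 i else g.1 i)
            = fun i => if i = i0 then (a : G) * (if i = i0 then (b : G) * g.1 i else g.1 i)
              else (if i = i0 then (b : G) * g.1 i else g.1 i)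
        funext i
        by_cases h : i = i0 <;> simp [h, mul_assoc] }
  apply card_dvd_of_free_action
  intro a g hag
  have hval := congrFun (congrArg Subtype.val hag) i0
  change (if i0 = i0 then (a : G) * g.1 i0 else g.1 i0) = g.1 i0 at hval
  rw [if_pos rfl] at hval
  have h1 : (a : G) = 1 :=
    mul_right_cancel (b := g.1 i0) (a := (a : G)) (c := 1) (by rw [one_mul]; exact hval)
  exact Subtype.ext h1

lemma dvd_fib_noncentral [Finite G] {A : Subgroup G} [A.Normal]
    (hAc : A ⊓ Subgroup.center G = ⊥) {n : ℕ} (f : Fin n → G ⧸ A) :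
    Nat.card A ∣ Nat.card (fib (QuotientGroup.mk' A) n f ⊤) := by
  classical
  set π := QuotientGroup.mk' A with hπ
  haveI : Finite (fib π n f ⊤) := Subtype.finite
  have hmem : ∀ (a : A) (g : fib π n f ⊤),
      (⇑π ∘ (fun i => (a : G) * g.1 i * (a : G)⁻¹) = f ∧
       closure (range (fun i => (a : G) * g.1 i * (a : G)⁻¹)) = ⊤) := by
    intro a g
    constructor
    · funext i
      simp only [Function.comp_apply, map_mul, map_inv]
      have h1 : π (a : G) = 1 := (QuotientGroup.eq_one_iff _).2 a.2
      rw [h1, one_mul, inv_one, mul_one]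
      exact congrFun g.2.1 i
    · have hrw : (fun i => (a : G) * g.1 i * (a : G)⁻¹) =
          ⇑((MulAut.conj (a : G)).toMonoidHom) ∘ g.1 := by
        funext i; rfl
      rw [hrw, range_comp, ← MonoidHom.map_closure, g.2.2]
      exact Subgroup.map_top_of_surjective _ (MulAut.conj (a : G)).surjective
  letI : MulAction A (fib π n f ⊤) :=
    { smul := fun a g => ⟨fun i => (a : G) * g.1 i * (a : G)⁻¹, hmem a g⟩
      one_smul := fun g => by
        apply Subtype.ext
        show (fun i => ((1 : A) : G) * g.1 i * ((1 : A) : G)⁻¹) = g.1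
        funext i
        simp
      mul_smul := fun a b g => by
        apply Subtype.ext
        show (fun i => ((a * b : A) : G) * g.1 i * ((a * b : A) : G)⁻¹)
            = fun i => (a : G) * ((b : G) * g.1 i * (b : G)⁻¹) * (a : G)⁻¹
        funext i
        simp only [Subgroup.coe_mul, mul_inv_rev]
        group }
  apply card_dvd_of_free_action
  intro a g hag
  have key : ∀ i, (a : G) * g.1 i * (a : G)⁻¹ = g.1 i :=
    fun i => congrFun (congrArg Subtype.val hag) i
  have hcen : (a : G) ∈ Subgroup.center G := by
    have hsub : range g.1 ⊆ (Subgroup.centralizer {(a : G)} : Set G) := by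
      rintro x ⟨i, rfl⟩
      rw [SetLike.mem_coe, Subgroup.mem_centralizer_iff]
      intro h hh
      rcases hh with rfl
      exact mul_inv_eq_iff_eq_mul.mp (key i)
    have h1 : (⊤ : Subgroup G) ≤ Subgroup.centralizer {(a : G)} := by
      rw [← g.2.2]; exact closure_le _ |>.2 hsub
    have h2 : Subgroup.centralizer {(a : G)} = ⊤ := top_le_iff.1 h1
    exact Subgroup.centralizer_eq_top_iff_subset.1 h2 rfl
  have hmem2 : (a : G) ∈ A ⊓ Subgroup.center G := ⟨a.2, hcen⟩
  rw [hAc] at hmem2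
  exact Subtype.ext hmem2

lemma card_commutator_eq [Finite G] {A : Subgroup G} [A.Normal] (hA : A ≤ commutator G) :
    Nat.card (commutator G) = Nat.card A * Nat.card (commutator (G ⧸ A)) := by
  classical
  set π := QuotientGroup.mk' A with hπdef
  have h1 : commutator (G ⧸ A) = Subgroup.map π (commutator G) := by
    rw [commutator_def, commutator_def, Subgroup.map_commutator,
      ← MonoidHom.range_eq_map, MonoidHom.range_eq_top.2 (QuotientGroup.mk'_surjective A)]
  let φ : ↥(commutator G) →* G ⧸ A := π.comp (commutator G).subtype
  have hker : MonoidHom.ker φ = A.subgroupOf (commutator G) := by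
    ext x
    simp only [MonoidHom.mem_ker, MonoidHom.comp_apply, Subgroup.coe_subtype,
      Subgroup.mem_subgroupOf, φ]
    exact QuotientGroup.eq_one_iff _
  have hrange : MonoidHom.range φ = Subgroup.map π (commutator G) := by
    rw [MonoidHom.range_comp, Subgroup.range_subtype]
  have hcard : Nat.card (commutator G) =
      Nat.card (↥(commutator G) ⧸ MonoidHom.ker φ) * Nat.card (MonoidHom.ker φ) :=
    Subgroup.card_eq_card_quotient_mul_card_subgroup _
  rw [hcard, Nat.card_congr (QuotientGroup.quotientKerEquivRange φ).toEquiv, hrange, hker,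
    Nat.card_congr (Subgroup.subgroupOfEquivOfLe hA).toEquiv, h1, mul_comm]

end Central

section Main

theorem gen_dvd_aux : ∀ (m : ℕ) (G : Type*) [Group G] [Finite G], Nat.card G = m →
    ∀ (n : ℕ), 1 ≤ n →
    Nat.card (commutator G) ∣ Nat.card {g : Fin n → G // closure (range g) = ⊤} := by
  intro m
  induction m using Nat.strong_induction_on with
  | _ m ih =>
    intro G _ _ hm n hn
    classical
    by_cases hc : commutator G = ⊥
    · rw [hc, Subgroup.card_bot]
      exact one_dvd _
    · -- choose minimal normal subgroup inside the commutator subgroup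
      have hS : ({N : Subgroup G | N.Normal ∧ N ≠ ⊥ ∧ N ≤ commutator G}).Nonempty :=
        ⟨commutator G, Subgroup.commutator_normal ⊤ ⊤, hc, le_rfl⟩
      obtain ⟨A, hAS, hAmin⟩ := Set.exists_min_image _
        (fun N : Subgroup G => Nat.card N) (Set.toFinite _) hS
      haveI hAnormal : A.Normal := hAS.1
      have hAne : A ≠ ⊥ := hAS.2.1
      have hAle : A ≤ commutator G := hAS.2.2
      -- dichotomy: A central or A ∩ Z(G) = ⊥
      have hdich : A ≤ Subgroup.center G ∨ A ⊓ Subgroup.center G = ⊥ := by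
        by_cases h : A ⊓ Subgroup.center G = ⊥
        · exact Or.inr h
        · left
          have hnorm : (A ⊓ Subgroup.center G).Normal := by
            constructor
            intro x hx g
            have hxg : g * x * g⁻¹ = x := by
              rw [Subgroup.mem_center_iff.1 hx.2 g, mul_assoc, mul_inv_cancel, mul_one]
            exact ⟨hAnormal.conj_mem x hx.1 g, by rw [hxg]; exact hx.2⟩
          have hmem : (A ⊓ Subgroup.center G) ∈
              {N : Subgroup G | N.Normal ∧ N ≠ ⊥ ∧ N ≤ commutator G} :=
            ⟨hnorm, h, le_trans inf_le_left hAle⟩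
          have hle := hAmin _ hmem
          have heq : A ⊓ Subgroup.center G = A := by
            by_contra hne
            exact absurd hle (not_le.2 (subgroup_card_lt inf_le_left hne))
          rw [← heq]
          exact inf_le_right
      set π := QuotientGroup.mk' A with hπdef
      haveI : Finite (G ⧸ A) := Quotient.finite _
      -- partition the generating tuples along their images in the quotient
      have hgen : ∀ g : {g : Fin n → G // closure (range g) = ⊤},
          closure (range (⇑π ∘ g.1)) = (⊤ : Subgroup (G ⧸ A)) := by
        intro g
        rw [range_comp, ← MonoidHom.map_closure, g.2]
        exact Subgroup.map_top_of_surjective _ (QuotientGroup.mk'_surjective A)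
      let T := {f : Fin n → G ⧸ A // closure (range f) = ⊤}
      let cm : {g : Fin n → G // closure (range g) = ⊤} → T :=
        fun g => ⟨⇑π ∘ g.1, hgen g⟩
      have e : {g : Fin n → G // closure (range g) = ⊤} ≃
          Σ f : T, {x : {g : Fin n → G // closure (range g) = ⊤} // cm x = f} :=
        (Equiv.sigmaFiberEquiv cm).symm
      have e2 : ∀ f : T, {x : {g : Fin n → G // closure (range g) = ⊤} // cm x = f}
          ≃ fib π n f.1 ⊤ := by
        intro f
        refine ⟨fun x => ⟨x.1.1, congrArg Subtype.val x.2, x.1.2⟩,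
                fun y => ⟨⟨y.1, y.2.2⟩, Subtype.ext y.2.1⟩, ?_, ?_⟩
        · intro x; apply Subtype.ext; apply Subtype.ext; rfl
        · intro y; apply Subtype.ext; rfl
      rw [Nat.card_congr e]
      haveI : Fintype T := Fintype.ofFinite _
      haveI : ∀ f : T, Fintype {x : {g : Fin n → G // closure (range g) = ⊤} // cm x = f} :=
        fun f => Fintype.ofFinite _
      by_cases hT : Nonempty T
      · obtain ⟨f0⟩ := hT
        have hsum : Nat.card (Σ f : T,
              {x : {g : Fin n → G // closure (range g) = ⊤} // cm x = f})
            = Nat.card T * Nat.card (fib π n f0.1 ⊤) := by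
          rw [Nat.card_eq_fintype_card, Fintype.card_sigma]
          have hterm : ∀ f : T,
              Fintype.card {x : {g : Fin n → G // closure (range g) = ⊤} // cm x = f}
              = Nat.card (fib π n f0.1 ⊤) := by
            intro f
            rw [← Nat.card_eq_fintype_card, Nat.card_congr (e2 f)]
            exact fib_card_eq π n f.2 f0.2 ⊤
          rw [Finset.sum_congr rfl fun f _ => hterm f, Finset.sum_const, Finset.card_univ,
            smul_eq_mul]
          congr 1
          exact Nat.card_eq_fintype_card.symm
        rw [hsum]
        have hdvd1 : Nat.card A ∣ Nat.card (fib π n f0.1 ⊤) := by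
          rcases hdich with hcent | hncent
          · exact dvd_fib_central hAle hcent (Nat.lt_of_lt_of_le Nat.zero_lt_one hn) f0.1
          · exact dvd_fib_noncentral hncent f0.1
        have hlt : Nat.card (G ⧸ A) < m := by
          rw [← hm, Subgroup.card_eq_card_quotient_mul_card_subgroup A]
          have h2 : 1 < Nat.card A := (Subgroup.one_lt_card_iff_ne_bot (H := A)).2 hAne
          have h3 : 0 < Nat.card (G ⧸ A) := Nat.card_pos
          exact (lt_mul_iff_one_lt_right h3).2 h2
        have hdvd2 : Nat.card (commutator (G ⧸ A)) ∣ Nat.card T :=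
          ih _ hlt (G ⧸ A) rfl n hn
        rw [card_commutator_eq hAle, mul_comm]
        exact mul_dvd_mul hdvd2 hdvd1
      · haveI hTe : IsEmpty T := not_nonempty_iff.1 hT
        haveI : IsEmpty (Σ f : T,
            {x : {g : Fin n → G // closure (range g) = ⊤} // cm x = f}) := inferInstance
        have hzero : Nat.card (Σ f : T,
            {x : {g : Fin n → G // closure (range g) = ⊤} // cm x = f}) = 0 :=
          Nat.card_of_isEmpty
        rw [hzero]
        exact dvd_zero _
end Main

theorem stmt_18 (G : Type*) [Group G] [Fintype G] (n : ℕ) (hn : 1 ≤ n) :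
    Nat.card (commutator G) ∣
      Nat.card {g : Fin n → G // Subgroup.closure (Set.range g) = (⊤ : Subgroup G)} := by
  exact gen_dvd_aux (Nat.card G) G rfl n hn
end
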